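/- arXiv:2301.04735 — 9 statements merged into one kernel-verified Lean document; each statement's English description precedes it below -/
import Mathlib

section
/- Let d ≥ 1 and let R, T be positive semidefinite d×d complex matrices. Let λ₁(R) ≥ λ₂(R) ≥ … ≥ λ_d(R) and λ₁(T) ≥ … ≥ λ_d(T) denote their eigenvalues listed in nonincreasing order. Then the supremum over unitary d×d complex matrices U of F(R, U T U*) equals (Σ_{i=1}^d √(λ_i(R) λ_i(T)))², and this supremum is attained by some unitary U. -/
open Matrix
open scoped ComplexOrder Classical

namespace Matrix.PosSemidef

noncomputable def sqrt {n 𝕜 : Type*} [Fintype n] [RCLike 𝕜] [DecidableEq n]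
    {A : Matrix n n 𝕜} (hA : PosSemidef A) : Matrix n n 𝕜 :=
  hA.1.eigenvectorUnitary.1 * diagonal ((↑) ∘ (√·) ∘ hA.1.eigenvalues) *
  (star hA.1.eigenvectorUnitary : Matrix n n 𝕜)

lemma posSemidef_sqrt {n 𝕜 : Type*} [Fintype n] [RCLike 𝕜] [DecidableEq n]
    {A : Matrix n n 𝕜} (hA : PosSemidef A) : PosSemidef hA.sqrt := by
  apply PosSemidef.mul_mul_conjTranspose_same
  refine posSemidef_diagonal_iff.mpr fun i ↦ ?_
  rw [Function.comp_apply, RCLike.nonneg_iff]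
  constructor
  · simp only [RCLike.ofReal_re]
    exact Real.sqrt_nonneg _
  · simp only [RCLike.ofReal_im]

end Matrix.PosSemidef

/-- Fidelity of two positive semidefinite matrices:
`F(R,S) = (Tr √(√R S √R))²` (junk value `0` if either is not PSD). -/
noncomputable def fid {d : ℕ} (R S : Matrix (Fin d) (Fin d) ℂ) : ℝ :=
  if h : R.PosSemidef ∧ S.PosSemidef then
    ((Matrix.PosSemidef.sqrt (show ((h.1.sqrt * S * h.1.sqrt)).PosSemidef by
        have h2 := h.2.mul_mul_conjTranspose_same h.1.sqrt
        rwa [h.1.posSemidef_sqrt.isHermitian.eq] at h2)).trace).re ^ 2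
  else 0

/-!
Diagonalize `R = P diag(λ(R)) P*` and `T = Q diag(λ(T)) Q*` with both spectra in nonincreasing
order. The unitary `U = P Q*` makes `R` and `U T U*` simultaneously diagonal, and then
`F(R, U T U*) = (∑ √(λᵢ(R) λᵢ(T)))²`.

For the upper bound put `M = √R U √T U*`, so that `M M* = √R (U T U*) √R`. By polar decomposition
`Tr √(M M*) = Tr (M V)` for a unitary `V`, and in the two eigenbases this trace reads
`∑ₖₗ √λₖ(R) Gₖₗ √λₗ(T) Hₗₖ` with `G`, `H` unitary. By AM-GM its real part is at most
`∑ₖₗ √λₖ(R) Dₖₗ √λₗ(T)` for the doubly stochastic `D = (|Gₖₗ|² + |Hₗₖ|²) / 2`, and Birkhoff's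
theorem together with the rearrangement inequality bounds this by `∑ √λᵢ(R) √λᵢ(T)`.
-/

theorem Monovary.dotProduct_mulVec_le_of_mem_doublyStochastic {R n : Type*} [Fintype n]
    [DecidableEq n] [Field R] [LinearOrder R] [IsStrictOrderedRing R] {f g : n → R}
    (hfg : Monovary f g) {D : Matrix n n R} (hD : D ∈ doublyStochastic R n) :
    f ⬝ᵥ (D *ᵥ g) ≤ f ⬝ᵥ g := by
  obtain ⟨w, hw_nonneg, hw_sum, rfl⟩ := exists_eq_sum_perm_of_mem_doublyStochastic hD
  calc f ⬝ᵥ ((∑ σ, w σ • σ.permMatrix R) *ᵥ g) = ∑ σ, w σ * (f ⬝ᵥ (g ∘ σ)) := by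
        simp only [Matrix.sum_mulVec, Matrix.smul_mulVec, PEquiv.toMatrix_toPEquiv_mulVec,
          dotProduct_sum, dotProduct_smul, smul_eq_mul]
    _ ≤ ∑ σ, w σ * (f ⬝ᵥ g) := Finset.sum_le_sum fun σ _ ↦
        mul_le_mul_of_nonneg_left hfg.sum_mul_comp_perm_le_sum_mul (hw_nonneg σ)
    _ = f ⬝ᵥ g := by rw [← Finset.sum_mul, hw_sum, one_mul]

namespace Matrix

variable {n 𝕜 : Type*} [Fintype n] [DecidableEq n] [RCLike 𝕜]

theorem conjTranspose_mul_self_of_mem_unitaryGroup {U : Matrix n n 𝕜}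
    (hU : U ∈ unitaryGroup n 𝕜) : Uᴴ * U = 1 :=
  Unitary.star_mul_self_of_mem hU

theorem mul_conjTranspose_self_of_mem_unitaryGroup {U : Matrix n n 𝕜}
    (hU : U ∈ unitaryGroup n 𝕜) : U * Uᴴ = 1 :=
  Unitary.mul_star_self_of_mem hU

theorem trace_mul_mul_conjTranspose_of_mem_unitaryGroup {U : Matrix n n 𝕜}
    (hU : U ∈ unitaryGroup n 𝕜) (X : Matrix n n 𝕜) : (U * X * Uᴴ).trace = X.trace := by
  rw [trace_mul_cycle, conjTranspose_mul_self_of_mem_unitaryGroup hU, one_mul]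

theorem of_norm_sq_mem_doublyStochastic {U : Matrix n n 𝕜} (hU : U ∈ unitaryGroup n 𝕜) :
    of (fun i j ↦ ‖U i j‖ ^ 2) ∈ doublyStochastic ℝ n := by
  have row_sum {V : Matrix n n 𝕜} (hV : V ∈ unitaryGroup n 𝕜) (i : n) :
      ∑ j, ‖V i j‖ ^ 2 = 1 := by
    have h := congrFun (congrFun (mem_unitaryGroup_iff.mp hV) i) i
    simp only [mul_apply, star_apply, RCLike.star_def, RCLike.mul_conj, one_apply_eq] at h
    exact_mod_cast h
  refine mem_doublyStochastic_iff_sum.mpr ⟨fun i j ↦ sq_nonneg _, row_sum hU, fun j ↦ ?_⟩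
  simpa using row_sum (transpose_mem_unitaryGroup_iff.mpr hU) j

theorem re_trace_diagonal_mul_mul_diagonal_mul_le {a b : n → ℝ} (ha : 0 ≤ a) (hb : 0 ≤ b)
    (hab : Monovary a b) {G H : Matrix n n 𝕜} (hG : G ∈ unitaryGroup n 𝕜)
    (hH : H ∈ unitaryGroup n 𝕜) :
    RCLike.re (diagonal (fun i ↦ (a i : 𝕜)) * G * diagonal (fun i ↦ (b i : 𝕜)) * H).trace ≤
      a ⬝ᵥ b := by
  set D : Matrix n n ℝ :=
    (1 / 2 : ℝ) • of (fun k l ↦ ‖G k l‖ ^ 2) + (1 / 2 : ℝ) • (of fun k l ↦ ‖H k l‖ ^ 2)ᵀ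
  have hD : D ∈ doublyStochastic ℝ n :=
    convex_doublyStochastic (of_norm_sq_mem_doublyStochastic hG)
      (transpose_mem_doublyStochastic_iff.mpr (of_norm_sq_mem_doublyStochastic hH))
      (by norm_num) (by norm_num) (by norm_num)
  refine le_trans ?_ (hab.dotProduct_mulVec_le_of_mem_doublyStochastic hD)
  simp only [trace, diag, mul_apply (N := H), mul_diagonal, diagonal_mul, dotProduct, mulVec,
    map_sum, Finset.mul_sum]
  gcongr with k _ l _
  calc RCLike.re ((a k : 𝕜) * G k l * (b l : 𝕜) * H l k)
      ≤ ‖(a k : 𝕜) * G k l * (b l : 𝕜) * H l k‖ := RCLike.re_le_norm _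
    _ = a k * b l * (‖G k l‖ * ‖H l k‖) := by
        simp only [norm_mul, RCLike.norm_ofReal, abs_of_nonneg (ha k), abs_of_nonneg (hb l)]
        ring
    _ ≤ a k * b l * ((‖G k l‖ ^ 2 + ‖H l k‖ ^ 2) / 2) := by
        gcongr
        · exact mul_nonneg (ha k) (hb l)
        · nlinarith [sq_nonneg (‖G k l‖ - ‖H l k‖)]
    _ = a k * (D k l * b l) := by
        simp only [D, add_apply, smul_apply, of_apply, transpose_apply, smul_eq_mul]
        ring

theorem re_trace_conj_diagonal_mul_mul_conj_diagonal_mul_le {P Q U V : Matrix n n 𝕜}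
    (hP : P ∈ unitaryGroup n 𝕜) (hQ : Q ∈ unitaryGroup n 𝕜) (hU : U ∈ unitaryGroup n 𝕜)
    (hV : V ∈ unitaryGroup n 𝕜) {a b : n → ℝ} (ha : 0 ≤ a) (hb : 0 ≤ b) (hab : Monovary a b) :
    RCLike.re (P * diagonal (fun i ↦ (a i : 𝕜)) * Pᴴ * U *
      (Q * diagonal (fun i ↦ (b i : 𝕜)) * Qᴴ) * V).trace ≤ a ⬝ᵥ b := by
  have hG : Pᴴ * U * Q ∈ unitaryGroup n 𝕜 := mul_mem (mul_mem (Unitary.star_mem hP) hU) hQ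
  have hH : Qᴴ * V * P ∈ unitaryGroup n 𝕜 := mul_mem (mul_mem (Unitary.star_mem hQ) hV) hP
  convert re_trace_diagonal_mul_mul_diagonal_mul_le ha hb hab hG hH using 2
  simp only [mul_assoc]
  rw [trace_mul_comm P]
  simp only [mul_assoc]

open scoped InnerProductSpace in
theorem exists_unitary_mul_diagonal_sqrt_eq {L : Matrix n n 𝕜} {ν : n → ℝ}
    (hL : Lᴴ * L = diagonal (fun i ↦ (ν i : 𝕜))) :
    ∃ C ∈ unitaryGroup n 𝕜, C * diagonal (fun i ↦ (√(ν i) : 𝕜)) = L := by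
  let col (j : n) : EuclideanSpace 𝕜 n := WithLp.toLp 2 (fun i ↦ L i j)
  have inner_col (i j : n) : ⟪col i, col j⟫_𝕜 = if i = j then (ν i : 𝕜) else 0 := by
    have h := congrFun (congrFun hL i) j
    simp only [mul_apply, conjTranspose_apply, diagonal_apply] at h
    rw [EuclideanSpace.inner_eq_star_dotProduct, ← h, dotProduct]
    simp only [col, Pi.star_apply, mul_comm]
  have hν (i : n) : 0 ≤ ν i := by
    have h := inner_self_nonneg (𝕜 := 𝕜) (x := col i)
    rwa [inner_col, if_pos rfl, RCLike.ofReal_re] at h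
  -- Normalize the nonzero columns and extend them to an orthonormal basis; the zero columns
  -- (those with `ν j = 0`) do not constrain the corresponding columns of `C`.
  let v (j : n) : EuclideanSpace 𝕜 n := (√(ν j) : 𝕜)⁻¹ • col j
  have hv : Orthonormal 𝕜 ({j | ν j ≠ 0}.domRestrict v) := by
    rw [orthonormal_iff_ite]
    rintro ⟨i, hi⟩ ⟨j, hj⟩
    simp only [Set.domRestrict_apply, v, inner_smul_left, inner_smul_right, inner_col]
    by_cases hij : i = j
    · subst hij
      have h : (√(ν i))⁻¹ * ((√(ν i))⁻¹ * ν i) = 1 := by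
        rw [← mul_assoc, ← mul_inv, ← sq, Real.sq_sqrt (hν i), inv_mul_cancel₀ hi]
      simp only [if_true, map_inv₀, RCLike.conj_ofReal]
      exact_mod_cast h
    · simp [hij]
  obtain ⟨b, hb⟩ := hv.exists_orthonormalBasis_extension_of_card_eq (by simp)
  refine ⟨(EuclideanSpace.basisFun n 𝕜).toBasis.toMatrix b,
    (EuclideanSpace.basisFun n 𝕜).toMatrix_orthonormalBasis_mem_unitary b, ?_⟩
  ext i j
  simp only [mul_diagonal, Module.Basis.toMatrix_apply, OrthonormalBasis.coe_toBasis_repr_apply,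
    EuclideanSpace.basisFun_repr]
  by_cases hj : ν j = 0
  · have hcol : col j = 0 :=
      inner_self_eq_zero.mp (by rw [inner_col, if_pos rfl, hj, RCLike.ofReal_zero])
    simpa [hj] using (congrArg (fun x : EuclideanSpace 𝕜 n ↦ x i) hcol).symm
  · have hs : (√(ν j) : 𝕜) ≠ 0 := by
      exact_mod_cast Real.sqrt_ne_zero'.mpr ((hν j).lt_of_ne' hj)
    rw [hb j hj]
    simp only [v, col, PiLp.smul_apply, smul_eq_mul]
    field_simp

theorem IsHermitian.exists_mem_unitaryGroup_eq_mul_diagonal_mul {A : Matrix n n 𝕜}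
    (hA : A.IsHermitian) {l : n → ℝ} (hl : ∃ σ : Equiv.Perm n, l = hA.eigenvalues ∘ σ) :
    ∃ U ∈ unitaryGroup n 𝕜, A = U * diagonal (fun i ↦ (l i : 𝕜)) * Uᴴ := by
  obtain ⟨σ, rfl⟩ := hl
  set W : Matrix n n 𝕜 := hA.eigenvectorUnitary.1
  refine ⟨W.submatrix id σ, ?_, ?_⟩
  · rw [mem_unitaryGroup_iff', star_eq_conjTranspose, conjTranspose_submatrix,
      ← submatrix_mul _ _ _ _ _ Function.bijective_id,
      conjTranspose_mul_self_of_mem_unitaryGroup hA.eigenvectorUnitary.2, submatrix_one_equiv]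
  · rw [show (fun i ↦ ((hA.eigenvalues ∘ σ) i : 𝕜)) = (fun i ↦ (hA.eigenvalues i : 𝕜)) ∘ σ
        from rfl, conjTranspose_submatrix, ← submatrix_diagonal_equiv,
      submatrix_mul_equiv, submatrix_mul_equiv, submatrix_id_id]
    have := hA.spectral_theorem
    rw [Unitary.conjStarAlgAut_apply] at this
    exact this

theorem posSemidef_mul_diagonal_mul_conjTranspose {a : n → ℝ} (ha : 0 ≤ a) (U : Matrix n n 𝕜) :
    (U * diagonal (fun i ↦ (a i : 𝕜)) * Uᴴ).PosSemidef :=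
  (posSemidef_diagonal_iff.mpr fun i ↦ RCLike.ofReal_nonneg.mpr (ha i)).mul_mul_conjTranspose_same
    U

theorem mul_diagonal_mul_conjTranspose_mul_mul_diagonal_mul_conjTranspose {U : Matrix n n 𝕜}
    (hU : U ∈ unitaryGroup n 𝕜) (a b : n → 𝕜) :
    U * diagonal a * Uᴴ * (U * diagonal b * Uᴴ) = U * diagonal (fun i ↦ a i * b i) * Uᴴ := by
  rw [← diagonal_mul_diagonal]
  simp only [mul_assoc]
  rw [← mul_assoc Uᴴ, conjTranspose_mul_self_of_mem_unitaryGroup hU, one_mul]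

namespace PosSemidef

open MatrixOrder in
theorem sqrt_eq_cfcSqrt {A : Matrix n n 𝕜} (hA : A.PosSemidef) : hA.sqrt = CFC.sqrt A := by
  rw [CFC.sqrt_eq_real_sqrt A hA.nonneg, cfcₙ_eq_cfc, hA.1.cfc_eq]
  rfl

open MatrixOrder in
theorem sqrt_mul_sqrt {A : Matrix n n 𝕜} (hA : A.PosSemidef) : hA.sqrt * hA.sqrt = A := by
  rw [sqrt_eq_cfcSqrt]
  exact CFC.sqrt_mul_sqrt_self A hA.nonneg

open MatrixOrder in
theorem sqrt_eq_of_mul_self_eq {A B : Matrix n n 𝕜} (hA : A.PosSemidef) (hB : B.PosSemidef)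
    (h : B * B = A) : hA.sqrt = B := by
  rw [sqrt_eq_cfcSqrt]
  exact CFC.sqrt_unique h hB.nonneg

theorem posSemidef_sqrt_mul_mul_sqrt {A B : Matrix n n 𝕜} (hA : A.PosSemidef)
    (hB : B.PosSemidef) : (hA.sqrt * B * hA.sqrt).PosSemidef := by
  simpa only [hA.posSemidef_sqrt.isHermitian.eq] using hB.mul_mul_conjTranspose_same hA.sqrt

theorem exists_unitary_mul_eq_sqrt {A M : Matrix n n 𝕜} (h : A.PosSemidef) (hMA : M * Mᴴ = A) :
    ∃ V ∈ unitaryGroup n 𝕜, M * V = h.sqrt := by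
  subst hMA
  have hdiag := h.1.conjStarAlgAut_star_eigenvectorUnitary
  rw [Unitary.conjStarAlgAut_apply] at hdiag
  simp only [Unitary.coe_star, star_star] at hdiag
  set W : Matrix n n 𝕜 := h.1.eigenvectorUnitary.1
  have hW : W ∈ unitaryGroup n 𝕜 := h.1.eigenvectorUnitary.2
  obtain ⟨C, hC, hCW⟩ := exists_unitary_mul_diagonal_sqrt_eq (L := Mᴴ * W)
    (ν := h.1.eigenvalues) (by
      rw [conjTranspose_mul, conjTranspose_conjTranspose]
      simp only [mul_assoc] at hdiag ⊢
      exact hdiag)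
  set s : n → 𝕜 := fun i ↦ (√(h.1.eigenvalues i) : 𝕜)
  have hM : M = W * diagonal s * Cᴴ := by
    have := congrArg (fun X : Matrix n n 𝕜 ↦ Xᴴ) hCW
    have hs : star s = s := funext fun i ↦ RCLike.conj_ofReal _
    simp only [conjTranspose_mul, conjTranspose_conjTranspose, diagonal_conjTranspose, hs]
      at this
    rw [mul_assoc, this, ← mul_assoc, mul_conjTranspose_self_of_mem_unitaryGroup hW, one_mul]
  refine ⟨C * Wᴴ, mul_mem hC (Unitary.star_mem hW), ?_⟩
  calc M * (C * Wᴴ) = W * diagonal s * Cᴴ * (C * Wᴴ) := congrArg (· * _) hM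
    _ = h.sqrt := by
        rw [mul_assoc (W * diagonal s), ← mul_assoc Cᴴ,
          conjTranspose_mul_self_of_mem_unitaryGroup hC, one_mul]
        rfl

theorem sqrt_eq_mul_diagonal_mul {A U : Matrix n n 𝕜} (hA : A.PosSemidef)
    (hU : U ∈ unitaryGroup n 𝕜) {a : n → ℝ} (ha : 0 ≤ a)
    (hAU : A = U * diagonal (fun i ↦ (a i : 𝕜)) * Uᴴ) :
    hA.sqrt = U * diagonal (fun i ↦ (√(a i) : 𝕜)) * Uᴴ := by
  refine hA.sqrt_eq_of_mul_self_eq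
    (posSemidef_mul_diagonal_mul_conjTranspose (fun i ↦ Real.sqrt_nonneg _) U) ?_
  rw [mul_diagonal_mul_conjTranspose_mul_mul_diagonal_mul_conjTranspose hU, hAU]
  congr with i
  exact_mod_cast Real.mul_self_sqrt (ha i)

end PosSemidef

end Matrix

theorem fid_eq_sq_re_trace_sqrt {d : ℕ} {R S : Matrix (Fin d) (Fin d) ℂ} (hR : R.PosSemidef)
    (hS : S.PosSemidef) :
    fid R S = (hR.posSemidef_sqrt_mul_mul_sqrt hS).sqrt.trace.re ^ 2 := by
  rw [fid, dif_pos ⟨hR, hS⟩]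

theorem fid_mul_diagonal_mul_le {d : ℕ} {P Q U : Matrix (Fin d) (Fin d) ℂ}
    (hP : P ∈ unitaryGroup (Fin d) ℂ) (hQ : Q ∈ unitaryGroup (Fin d) ℂ)
    (hU : U ∈ unitaryGroup (Fin d) ℂ) {a b : Fin d → ℝ} (ha : 0 ≤ a) (hb : 0 ≤ b)
    (hab : Monovary a b) :
    fid (P * diagonal (fun i ↦ (a i : ℂ)) * Pᴴ)
        (U * (Q * diagonal (fun i ↦ (b i : ℂ)) * Qᴴ) * Uᴴ) ≤ (∑ i, √(a i * b i)) ^ 2 := by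
  have hR : (P * diagonal (fun i ↦ (a i : ℂ)) * Pᴴ).PosSemidef :=
    posSemidef_mul_diagonal_mul_conjTranspose ha P
  have hT : (Q * diagonal (fun i ↦ (b i : ℂ)) * Qᴴ).PosSemidef :=
    posSemidef_mul_diagonal_mul_conjTranspose hb Q
  have hS := hT.mul_mul_conjTranspose_same U
  set h := hR.posSemidef_sqrt_mul_mul_sqrt hS
  rw [fid_eq_sq_re_trace_sqrt hR hS]
  obtain ⟨V, hV, hMV⟩ := h.exists_unitary_mul_eq_sqrt (M := hR.sqrt * U * hT.sqrt * Uᴴ) (by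
    simp only [conjTranspose_mul, conjTranspose_conjTranspose, hR.posSemidef_sqrt.isHermitian.eq,
      hT.posSemidef_sqrt.isHermitian.eq, mul_assoc]
    rw [← mul_assoc Uᴴ U, conjTranspose_mul_self_of_mem_unitaryGroup hU, one_mul,
      ← mul_assoc hT.sqrt, hT.sqrt_mul_sqrt]
    simp only [mul_assoc])
  have h_nonneg : 0 ≤ h.sqrt.trace.re :=
    (Complex.nonneg_iff.mp h.posSemidef_sqrt.trace_nonneg).1
  have h_le : h.sqrt.trace.re ≤ ∑ i, √(a i * b i) := by
    rw [← hMV, hR.sqrt_eq_mul_diagonal_mul hP ha rfl, hT.sqrt_eq_mul_diagonal_mul hQ hb rfl,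
      mul_assoc _ Uᴴ V]
    calc _ ≤ (fun i ↦ √(a i)) ⬝ᵥ (fun i ↦ √(b i)) :=
          re_trace_conj_diagonal_mul_mul_conj_diagonal_mul_le hP hQ hU
            (mul_mem (Unitary.star_mem hU) hV)
            (fun i ↦ Real.sqrt_nonneg _) (fun i ↦ Real.sqrt_nonneg _)
            ((hab.comp_monotone_left Real.sqrt_monotone).symm.comp_monotone_left
              Real.sqrt_monotone).symm
      _ = ∑ i, √(a i * b i) := by simp only [dotProduct, Real.sqrt_mul (ha _)]
  exact pow_le_pow_left₀ h_nonneg h_le 2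

theorem fid_mul_diagonal_mul_eq {d : ℕ} {P Q : Matrix (Fin d) (Fin d) ℂ}
    (hP : P ∈ unitaryGroup (Fin d) ℂ) (hQ : Q ∈ unitaryGroup (Fin d) ℂ) {a b : Fin d → ℝ}
    (ha : 0 ≤ a) (hb : 0 ≤ b) :
    fid (P * diagonal (fun i ↦ (a i : ℂ)) * Pᴴ)
        (P * Qᴴ * (Q * diagonal (fun i ↦ (b i : ℂ)) * Qᴴ) * (P * Qᴴ)ᴴ)
      = (∑ i, √(a i * b i)) ^ 2 := by
  have h_conj : P * Qᴴ * (Q * diagonal (fun i ↦ (b i : ℂ)) * Qᴴ) * (P * Qᴴ)ᴴ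
      = P * diagonal (fun i ↦ (b i : ℂ)) * Pᴴ := by
    simp only [conjTranspose_mul, conjTranspose_conjTranspose, mul_assoc]
    rw [← mul_assoc Qᴴ Q, conjTranspose_mul_self_of_mem_unitaryGroup hQ, one_mul,
      ← mul_assoc Qᴴ Q, conjTranspose_mul_self_of_mem_unitaryGroup hQ, one_mul]
  rw [h_conj]
  have hR : (P * diagonal (fun i ↦ (a i : ℂ)) * Pᴴ).PosSemidef :=
    posSemidef_mul_diagonal_mul_conjTranspose ha P
  have hS : (P * diagonal (fun i ↦ (b i : ℂ)) * Pᴴ).PosSemidef :=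
    posSemidef_mul_diagonal_mul_conjTranspose hb P
  have h_prod : hR.sqrt * (P * diagonal (fun i ↦ (b i : ℂ)) * Pᴴ) * hR.sqrt
      = P * diagonal (fun i ↦ ((a i * b i : ℝ) : ℂ)) * Pᴴ := by
    rw [hR.sqrt_eq_mul_diagonal_mul hP ha rfl,
      mul_diagonal_mul_conjTranspose_mul_mul_diagonal_mul_conjTranspose hP,
      mul_diagonal_mul_conjTranspose_mul_mul_diagonal_mul_conjTranspose hP]
    congr with i
    have : √(a i) * b i * √(a i) = a i * b i := by
      linear_combination b i * Real.mul_self_sqrt (ha i)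
    simp only [RCLike.ofReal_eq_complex_ofReal]
    exact_mod_cast this
  rw [fid_eq_sq_re_trace_sqrt hR hS, PosSemidef.sqrt_eq_mul_diagonal_mul _ hP
      (fun i ↦ mul_nonneg (ha i) (hb i)) h_prod,
    trace_mul_mul_conjTranspose_of_mem_unitaryGroup hP, trace_diagonal, Complex.re_sum]
  simp

theorem stmt_0_general (d : ℕ) (R T : Matrix (Fin d) (Fin d) ℂ)
    (hR : R.PosSemidef) (hT : T.PosSemidef)
    (lR lT : Fin d → ℝ) (hlR : Antitone lR) (hlT : Antitone lT)
    (hlRe : ∃ σ : Equiv.Perm (Fin d), lR = hR.1.eigenvalues ∘ σ)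
    (hlTe : ∃ σ : Equiv.Perm (Fin d), lT = hT.1.eigenvalues ∘ σ) :
    IsGreatest
      {x : ℝ | ∃ U ∈ Matrix.unitaryGroup (Fin d) ℂ, x = fid R (U * T * Uᴴ)}
      ((∑ i, Real.sqrt (lR i * lT i)) ^ 2) := by
  have hlR_nonneg : 0 ≤ lR := by
    obtain ⟨σ, rfl⟩ := hlRe
    exact fun i ↦ hR.eigenvalues_nonneg _
  have hlT_nonneg : 0 ≤ lT := by
    obtain ⟨σ, rfl⟩ := hlTe
    exact fun i ↦ hT.eigenvalues_nonneg _
  obtain ⟨P, hP, rfl⟩ := hR.1.exists_mem_unitaryGroup_eq_mul_diagonal_mul hlRe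
  obtain ⟨Q, hQ, rfl⟩ := hT.1.exists_mem_unitaryGroup_eq_mul_diagonal_mul hlTe
  refine ⟨⟨P * Qᴴ, mul_mem hP (Unitary.star_mem hQ),
    (fid_mul_diagonal_mul_eq hP hQ hlR_nonneg hlT_nonneg).symm⟩, ?_⟩
  rintro _ ⟨U, hU, rfl⟩
  exact fid_mul_diagonal_mul_le hP hQ hU hlR_nonneg hlT_nonneg (hlR.monovary hlT)

/-- the supremum over unitaries `U` of `F(R, U T U*)` is
`(∑ i, √(λ_i(R) λ_i(T)))²` for the nonincreasingly ordered eigenvalues,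
and it is attained. -/
theorem stmt_0 (d : ℕ) (hd : 1 ≤ d) (R T : Matrix (Fin d) (Fin d) ℂ)
    (hR : R.PosSemidef) (hT : T.PosSemidef)
    (lR lT : Fin d → ℝ) (hlR : Antitone lR) (hlT : Antitone lT)
    (hlRe : ∃ σ : Equiv.Perm (Fin d), lR = hR.1.eigenvalues ∘ σ)
    (hlTe : ∃ σ : Equiv.Perm (Fin d), lT = hT.1.eigenvalues ∘ σ) :
    IsGreatest
      {x : ℝ | ∃ U ∈ Matrix.unitaryGroup (Fin d) ℂ, x = fid R (U * T * Uᴴ)}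
      ((∑ i, Real.sqrt (lR i * lT i)) ^ 2) :=
  stmt_0_general d R T hR hT lR lT hlR hlT hlRe hlTe
end

section
/- Let d ≥ 1 and let r, t : Fin d → ℝ be nonnegative and nonincreasing. Define vectors ψ, φ ∈ ℂ^{Fin d × Fin d} by ψ(i,j) = √(r i) if i = j and 0 otherwise, and φ(i,j) = √(t i) if i = j and 0 otherwise. Then the supremum over pairs of unitary d×d complex matrices U, V of |⟨ψ, (U ⊗ V)·φ⟩|² equals (Σ_{i=1}^d √(r i · t i))², where U ⊗ V is the Kronecker product acting on ℂ^{Fin d × Fin d} by matrix–vector multiplication and ⟨·,·⟩ is the standard Hermitian inner product. (This is the optimal fidelity for converting the bipartite pure state with ordered Schmidt coefficients √(t i) into the one with ordered Schmidt coefficients √(r i) using local unitaries and no communication.) -/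
/-! The overlap is `∑ i j, √(r i) U i j V i j √(t j)`. Since
`‖U i j‖ ‖V i j‖ ≤ (‖U i j‖² + ‖V i j‖²) / 2` and the entrywise squared moduli of a unitary
matrix form a doubly stochastic matrix, its modulus is at most `√r ⬝ᵥ (D *ᵥ √t)` for some
doubly stochastic `D`. By Birkhoff's theorem this linear function of `D` is maximised at a
permutation matrix, and by the rearrangement inequality at the identity, which `U = V = 1`
attains. -/

open Matrix Finset
open scoped Kronecker

namespace Matrix

variable {n : Type*} [Fintype n] [DecidableEq n]

theorem dotProduct_mulVec_le_of_mem_doublyStochastic {a b : n → ℝ} (hab : Monovary a b)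
    {M : Matrix n n ℝ} (hM : M ∈ doublyStochastic ℝ n) :
    a ⬝ᵥ (M *ᵥ b) ≤ a ⬝ᵥ b := by
  have hlin : IsLinearMap ℝ fun N : Matrix n n ℝ => a ⬝ᵥ (N *ᵥ b) :=
    ⟨fun N N' => by simp [add_mulVec, dotProduct_add],
      fun c N => by simp [smul_mulVec, dotProduct_smul]⟩
  rw [← SetLike.mem_coe, doublyStochastic_eq_convexHull_permMatrix] at hM
  refine convexHull_min ?_ (convex_halfSpace_le hlin _) hM
  rintro _ ⟨σ, rfl⟩
  simpa [permMatrix_mulVec, dotProduct] using hab.sum_mul_comp_perm_le_sum_mul (σ := σ)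

theorem map_norm_sq_mem_doublyStochastic {U : Matrix n n ℂ} (hU : U ∈ unitaryGroup n ℂ) :
    U.map (‖·‖ ^ 2) ∈ doublyStochastic ℝ n := by
  have hrow : ∀ i, ∑ j, ‖U i j‖ ^ 2 = 1 := fun i => by
    have := congr_fun₂ (mem_unitaryGroup_iff.mp hU) i i
    simp only [mul_apply, star_apply, one_apply_eq, RCLike.star_def, Complex.mul_conj,
      Complex.normSq_eq_norm_sq] at this
    exact_mod_cast this
  have hcol : ∀ j, ∑ i, ‖U i j‖ ^ 2 = 1 := fun j => by
    have := congr_fun₂ (mem_unitaryGroup_iff'.mp hU) j j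
    simp only [mul_apply, star_apply, one_apply_eq, RCLike.star_def, mul_comm _ (U _ j),
      Complex.mul_conj, Complex.normSq_eq_norm_sq] at this
    exact_mod_cast this
  exact mem_doublyStochastic_iff_sum.mpr ⟨fun i j => sq_nonneg _, hrow, hcol⟩

theorem sum_star_diag_mul_kronecker_mulVec_diag {R : Type*} [CommSemiring R] [StarRing R]
    (a b : n → R) (U V : Matrix n n R) :
    ∑ y : n × n, starRingEnd R (if y.1 = y.2 then a y.1 else 0) *
      ((U ⊗ₖ V) *ᵥ fun z : n × n => if z.1 = z.2 then b z.1 else 0) y =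
    star a ⬝ᵥ ((U ⊙ V) *ᵥ b) := by
  simp [Fintype.sum_prod_type, mulVec, dotProduct, apply_ite, mul_sum, starRingEnd_apply]

theorem norm_star_dotProduct_hadamard_mulVec_le {a b : n → ℝ} (ha : 0 ≤ a) (hb : 0 ≤ b)
    (hab : Monovary a b) {U V : Matrix n n ℂ} (hU : U ∈ unitaryGroup n ℂ)
    (hV : V ∈ unitaryGroup n ℂ) :
    ‖star (fun i => (a i : ℂ)) ⬝ᵥ ((U ⊙ V) *ᵥ fun j => (b j : ℂ))‖ ≤ a ⬝ᵥ b := by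
  set D : Matrix n n ℝ :=
    (2⁻¹ : ℝ) • U.map (‖·‖ ^ 2 : ℂ → ℝ) + (2⁻¹ : ℝ) • V.map (‖·‖ ^ 2 : ℂ → ℝ)
  have hD : D ∈ doublyStochastic ℝ n :=
    convex_doublyStochastic (map_norm_sq_mem_doublyStochastic hU)
      (map_norm_sq_mem_doublyStochastic hV) (by norm_num) (by norm_num) (by norm_num)
  have hUV : ∀ i j, ‖U i j‖ * ‖V i j‖ ≤ D i j := fun i j => by
    simp only [D, add_apply, smul_apply, map_apply, smul_eq_mul]
    nlinarith [sq_nonneg (‖U i j‖ - ‖V i j‖)]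
  calc ‖star (fun i => (a i : ℂ)) ⬝ᵥ ((U ⊙ V) *ᵥ fun j => (b j : ℂ))‖
      ≤ ∑ i, a i * ∑ j, ‖U i j‖ * ‖V i j‖ * b j := by
        refine (norm_sum_le _ _).trans (sum_le_sum fun i _ => ?_)
        rw [norm_mul]
        simp only [Pi.star_apply, Complex.star_def, Complex.conj_ofReal, Complex.norm_real,
          Real.norm_of_nonneg (ha i)]
        gcongr
        · exact ha i
        refine (norm_sum_le _ _).trans (le_of_eq (sum_congr rfl fun j _ => ?_))
        simp [Real.norm_of_nonneg (hb j)]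
    _ ≤ ∑ i, a i * ∑ j, D i j * b j := by
        gcongr with i _ j _
        · exact ha i
        · exact hb j
        · exact hUV i j
    _ ≤ a ⬝ᵥ b := dotProduct_mulVec_le_of_mem_doublyStochastic hab hD

end Matrix

theorem stmt_1_general (d : ℕ) (r t : Fin d → ℝ)
    (hr0 : ∀ i, 0 ≤ r i)
    (hr : Antitone r) (ht : Antitone t) :
    sSup {x : ℝ |
      ∃ U ∈ Matrix.unitaryGroup (Fin d) ℂ, ∃ V ∈ Matrix.unitaryGroup (Fin d) ℂ,
        x = ‖(∑ y : Fin d × Fin d,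
          (starRingEnd ℂ) (if y.1 = y.2 then (Real.sqrt (r y.1) : ℂ) else 0) *
            ((U ⊗ₖ V) *ᵥ
              (fun z : Fin d × Fin d =>
                if z.1 = z.2 then (Real.sqrt (t z.1) : ℂ) else 0)) y)‖ ^ 2}
    = (∑ i, Real.sqrt (r i * t i)) ^ 2 := by
  simp only [sum_star_diag_mul_kronecker_mulVec_diag (fun i => (√(r i) : ℂ))
    (fun i => (√(t i) : ℂ))]
  have hmono : Monovary (fun i => √(r i)) (fun i => √(t i)) :=
    (Real.sqrt_monotone.comp_antitone hr).monovary (Real.sqrt_monotone.comp_antitone ht)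
  have hsum : ∑ i, √(r i * t i) = (fun i => √(r i)) ⬝ᵥ (fun i => √(t i)) :=
    sum_congr rfl fun i _ => Real.sqrt_mul (hr0 i) _
  rw [hsum]
  refine IsGreatest.csSup_eq ⟨⟨1, one_mem _, 1, one_mem _, ?_⟩, ?_⟩
  · simp [dotProduct, hadamard_one, ← Complex.ofReal_mul, ← Complex.ofReal_sum]
  · rintro _ ⟨U, hU, V, hV, rfl⟩
    exact pow_le_pow_left₀ (norm_nonneg _) (norm_star_dotProduct_hadamard_mulVec_le
      (fun i => Real.sqrt_nonneg _) (fun i => Real.sqrt_nonneg _) hmono hU hV) 2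

/-- the optimal fidelity for converting the pure state with ordered
Schmidt coefficients `√(t i)` into the one with ordered Schmidt coefficients `√(r i)`
under local unitaries equals `(∑ i, √(r i * t i))²`. -/
theorem stmt_1 (d : ℕ) (hd : 1 ≤ d) (r t : Fin d → ℝ)
    (hr0 : ∀ i, 0 ≤ r i) (ht0 : ∀ i, 0 ≤ t i)
    (hr : Antitone r) (ht : Antitone t) :
    sSup {x : ℝ |
      ∃ U ∈ Matrix.unitaryGroup (Fin d) ℂ, ∃ V ∈ Matrix.unitaryGroup (Fin d) ℂ,
        x = ‖(∑ y : Fin d × Fin d,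
          (starRingEnd ℂ) (if y.1 = y.2 then (Real.sqrt (r y.1) : ℂ) else 0) *
            ((U ⊗ₖ V) *ᵥ
              (fun z : Fin d × Fin d =>
                if z.1 = z.2 then (Real.sqrt (t z.1) : ℂ) else 0)) y)‖ ^ 2}
    = (∑ i, Real.sqrt (r i * t i)) ^ 2 :=
  stmt_1_general d r t hr0 hr ht
end

section
/- Let d, d' ≥ 1 and let ψ ∈ ℂ^{Fin d × Fin d'} be a unit vector. Then there exist a unitary d×d matrix U, a unitary d'×d' matrix V, and a nonincreasing probability vector p on Fin (min d d'), such that ψ = (U ⊗ V)·ψ₀, where ψ₀ ∈ ℂ^{Fin d × Fin d'} is the vector with ψ₀(i,j) = √(p k) if i and j both equal the embedding of some index k < min d d' into Fin d and Fin d' respectively, and ψ₀(i,j) = 0 otherwise. (Every bipartite pure state is, up to local unitaries, of the canonical form with nonincreasing Schmidt coefficients.) -/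
/-!
Schmidt decomposition is the singular value decomposition of the coefficient matrix
`M i j = ψ (i, j)`, for which `ψ = vec Mᵀ`. Since `(U ⊗ₖ V) *ᵥ vec X = vec (V * X * Uᵀ)`, a
factorization `M = U * D * W` with `U`, `W` unitary and `D` rectangular diagonal gives
`ψ = (U ⊗ₖ Wᵀ) *ᵥ vec Dᵀ`. The singular values are nonnegative and nonincreasing, and their
squares sum to `∑ ‖ψ x‖ ^ 2 = 1` because `∑ ‖X i j‖ ^ 2 = tr (Xᴴ * X)` is unchanged by unitary
factors on either side.

For the factorization, let `v` be an orthonormal eigenbasis of `T† T` (`T` the map of `M`), sorted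
by decreasing eigenvalue `σⱼ ^ 2`. The vectors `T vⱼ / σⱼ` with `σⱼ ≠ 0` are orthonormal, and any
completion `w` of them to an orthonormal basis makes the matrix of `T` in the bases `v`, `w`
diagonal.
-/

open Module InnerProductSpace Matrix
open scoped Kronecker

namespace Matrix

def rectDiagonal {α : Type*} [Zero α] {m n : ℕ} (s : ℕ → α) : Matrix (Fin m) (Fin n) α :=
  of fun i j => if (i : ℕ) = j then s j else 0

theorem sum_norm_sq_rectDiagonal {α : Type*} [SeminormedAddCommGroup α] {m n : ℕ} (s : ℕ → α) :
    ∑ x : Fin m × Fin n, ‖rectDiagonal s x.1 x.2‖ ^ 2 = ∑ k : Fin (min m n), ‖s k‖ ^ 2 := by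
  symm
  refine Fintype.sum_of_injective
    (fun k => (Fin.castLE (min_le_left m n) k, Fin.castLE (min_le_right m n) k)) ?_ _ _ ?_ ?_
  · intro k l h
    exact Fin.ext (by simpa using congrArg (fun x => (x.1 : ℕ)) h)
  · rintro ⟨i, j⟩ hij
    simp only [rectDiagonal, of_apply]
    split_ifs with h
    · exact absurd ⟨⟨i, lt_min i.isLt (h ▸ j.isLt)⟩, Prod.ext rfl (Fin.ext h)⟩ hij
    · simp
  · intro k
    simp [rectDiagonal]

variable {𝕜 : Type*} [RCLike 𝕜]

theorem ofReal_sum_norm_sq_vec {m n : Type*} [Fintype m] [Fintype n] (X : Matrix m n 𝕜) :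
    ((∑ x, ‖vec X x‖ ^ 2 : ℝ) : 𝕜) = (Xᴴ * X).trace := by
  rw [← star_vec_dotProduct_vec]
  simp [dotProduct, RCLike.conj_mul]

theorem sum_norm_sq_vec_unitary_mul_mul {m n : Type*} [Fintype m] [Fintype n]
    [DecidableEq m] [DecidableEq n] {U : Matrix m m 𝕜} (hU : U ∈ unitaryGroup m 𝕜)
    (X : Matrix m n 𝕜) {W : Matrix n n 𝕜} (hW : W ∈ unitaryGroup n 𝕜) :
    ∑ x, ‖vec (U * X * W) x‖ ^ 2 = ∑ x, ‖vec X x‖ ^ 2 := by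
  apply RCLike.ofReal_injective (K := 𝕜)
  rw [ofReal_sum_norm_sq_vec, ofReal_sum_norm_sq_vec, conjTranspose_mul, conjTranspose_mul,
    ← star_eq_conjTranspose, ← star_eq_conjTranspose]
  calc (star W * (Xᴴ * star U) * (U * X * W)).trace
      = (star W * (Xᴴ * (star U * U) * X) * W).trace := by simp only [Matrix.mul_assoc]
    _ = (W * star W * (Xᴴ * X)).trace := by
        rw [mem_unitaryGroup_iff'.mp hU, Matrix.mul_one, trace_mul_cycle]
    _ = (Xᴴ * X).trace := by rw [mem_unitaryGroup_iff.mp hW, Matrix.one_mul]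

end Matrix

namespace LinearMap

variable {𝕜 E F : Type*} [RCLike 𝕜]
  [NormedAddCommGroup E] [InnerProductSpace 𝕜 E] [FiniteDimensional 𝕜 E]
  [NormedAddCommGroup F] [InnerProductSpace 𝕜 F] [FiniteDimensional 𝕜 F]
  (T : E →ₗ[𝕜] F) {n : ℕ} (hn : finrank 𝕜 E = n)

theorem singularValues_of_finrank_codomain_le {k : ℕ} (hk : finrank 𝕜 F ≤ k) :
    T.singularValues k = 0 :=
  T.singularValues_eq_zero_iff_le_finrank_range.mpr ((Submodule.finrank_le _).trans hk)

noncomputable def rightSingularBasis : OrthonormalBasis (Fin n) 𝕜 E :=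
  T.isSymmetric_adjoint_comp_self.eigenvectorBasis hn

theorem inner_apply_rightSingularBasis (i j : Fin n) :
    ⟪T (T.rightSingularBasis hn i), T (T.rightSingularBasis hn j)⟫_𝕜 =
      if i = j then ((T.singularValues j ^ 2 : ℝ) : 𝕜) else 0 := by
  rw [← adjoint_inner_right, ← comp_apply, rightSingularBasis,
    T.isSymmetric_adjoint_comp_self.apply_eigenvectorBasis, inner_smul_right,
    orthonormal_iff_ite.mp (OrthonormalBasis.orthonormal _), T.sq_singularValues_fin hn]
  split_ifs <;> simp

theorem apply_rightSingularBasis_eq_zero {j : Fin n} (hj : T.singularValues j = 0) :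
    T (T.rightSingularBasis hn j) = 0 := by
  rw [← inner_self_eq_zero (𝕜 := 𝕜), inner_apply_rightSingularBasis, if_pos rfl, hj]
  simp

theorem exists_orthonormalBasis_toMatrix_eq_rectDiagonal {m : ℕ} (hm : finrank 𝕜 F = m) :
    ∃ w : OrthonormalBasis (Fin m) 𝕜 F,
      toMatrix (T.rightSingularBasis hn).toBasis w.toBasis T =
        rectDiagonal fun k => (T.singularValues k : 𝕜) := by
  set b := T.rightSingularBasis hn
  set S : Set (Fin m) := {i | T.singularValues i ≠ 0}
  have hSn : ∀ i ∈ S, (i : ℕ) < n := fun i hi =>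
    not_le.mp fun h => hi (T.singularValues_of_finrank_le (hn ▸ h))
  let u : Fin m → F := fun i =>
    if h : (i : ℕ) < n then (T.singularValues i : 𝕜)⁻¹ • T (b ⟨i, h⟩) else 0
  have hu : Orthonormal 𝕜 (S.domRestrict u) := by
    rw [orthonormal_iff_ite]
    rintro ⟨i, hi⟩ ⟨i', hi'⟩
    have hσ : (T.singularValues i : 𝕜) ≠ 0 := by exact_mod_cast hi
    change ⟪u i, u i'⟫_𝕜 = _
    simp only [u, dif_pos (hSn i hi), dif_pos (hSn i' hi'), inner_smul_left, inner_smul_right, b,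
      inner_apply_rightSingularBasis, Fin.mk.injEq, Fin.val_inj, Subtype.mk.injEq, map_inv₀,
      RCLike.conj_ofReal]
    split_ifs with h
    · subst h
      push_cast
      field_simp
    · simp
  obtain ⟨w, hw⟩ := hu.exists_orthonormalBasis_extension_of_card_eq (by simp [hm])
  refine ⟨w, ?_⟩
  ext i j
  rw [toMatrix_apply, OrthonormalBasis.coe_toBasis_repr_apply, OrthonormalBasis.repr_apply_apply,
    OrthonormalBasis.coe_toBasis, rectDiagonal, of_apply]
  by_cases hj : T.singularValues j = 0
  · simp [b, apply_rightSingularBasis_eq_zero, hj]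
  have hjm : (j : ℕ) < m :=
    not_le.mp fun h => hj (T.singularValues_of_finrank_codomain_le (hm ▸ h))
  have hTb : T (b j) = (T.singularValues j : 𝕜) • w ⟨j, hjm⟩ := by
    have hσ : (T.singularValues j : 𝕜) ≠ 0 := by exact_mod_cast hj
    rw [hw _ hj]
    simp [u, smul_smul, hσ]
  rw [hTb, inner_smul_right, orthonormal_iff_ite.mp w.orthonormal]
  simp [Fin.ext_iff]

end LinearMap

theorem Matrix.exists_eq_unitary_mul_rectDiagonal_mul_unitary {𝕜 : Type*} [RCLike 𝕜] {m n : ℕ}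
    (M : Matrix (Fin m) (Fin n) 𝕜) :
    ∃ U ∈ unitaryGroup (Fin m) 𝕜, ∃ W ∈ unitaryGroup (Fin n) 𝕜,
      M = U * (rectDiagonal fun k => ((toEuclideanLin M).singularValues k : 𝕜) :
        Matrix (Fin m) (Fin n) 𝕜) * W := by
  set T := toEuclideanLin M
  obtain ⟨w, hw⟩ := T.exists_orthonormalBasis_toMatrix_eq_rectDiagonal
    finrank_euclideanSpace_fin finrank_euclideanSpace_fin
  refine ⟨_, (EuclideanSpace.basisFun (Fin m) 𝕜).toMatrix_orthonormalBasis_mem_unitary w, _,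
    (T.rightSingularBasis finrank_euclideanSpace_fin).toMatrix_orthonormalBasis_mem_unitary
      (EuclideanSpace.basisFun (Fin n) 𝕜), ?_⟩
  rw [← hw, ← w.coe_toBasis, ← (EuclideanSpace.basisFun (Fin n) 𝕜).coe_toBasis,
    basis_toMatrix_mul_linearMap_toMatrix_mul_basis_toMatrix]
  exact (LinearMap.toMatrix_toLin _ _ M).symm

theorem stmt_3_general (d d' : ℕ)
    (ψ : Fin d × Fin d' → ℂ) (hψ : ∑ x : Fin d × Fin d', ‖ψ x‖ ^ 2 = 1) :
    ∃ U ∈ Matrix.unitaryGroup (Fin d) ℂ, ∃ V ∈ Matrix.unitaryGroup (Fin d') ℂ,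
      ∃ p : Fin (min d d') → ℝ, (∀ k, 0 ≤ p k) ∧ (∑ k, p k = 1) ∧ Antitone p ∧
        ψ = (U ⊗ₖ V) *ᵥ (fun x : Fin d × Fin d' =>
          if h : (x.1 : ℕ) = (x.2 : ℕ) ∧ (x.1 : ℕ) < min d d'
          then (Real.sqrt (p ⟨x.1, h.2⟩) : ℂ) else 0) := by
  set M : Matrix (Fin d) (Fin d') ℂ := of fun i j => ψ (i, j)
  obtain ⟨U, hU, W, hW, hM⟩ := M.exists_eq_unitary_mul_rectDiagonal_mul_unitary
  set T := toEuclideanLin M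
  set D : Matrix (Fin d) (Fin d') ℂ := rectDiagonal fun k => (T.singularValues k : ℂ)
  have hψM : ψ = vec (Wᵀ * Dᵀ * Uᵀ) := by
    change vec Mᵀ = _
    rw [hM, transpose_mul, transpose_mul, Matrix.mul_assoc]
    rfl
  refine ⟨U, hU, Wᵀ, transpose_mem_unitaryGroup_iff.mpr hW, fun k => T.singularValues k ^ 2,
    fun k => sq_nonneg _, ?_, ?_, ?_⟩
  · calc ∑ k : Fin (min d d'), T.singularValues k ^ 2
          = ∑ x : Fin d × Fin d', ‖D x.1 x.2‖ ^ 2 := by simp [D, sum_norm_sq_rectDiagonal]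
      _ = ∑ x, ‖ψ x‖ ^ 2 := by
          rw [hψM, sum_norm_sq_vec_unitary_mul_mul (transpose_mem_unitaryGroup_iff.mpr hW) _
            (transpose_mem_unitaryGroup_iff.mpr hU)]
          rfl
      _ = 1 := hψ
  · exact fun a b hab =>
      pow_le_pow_left₀ (T.singularValues_nonneg _) (T.singularValues_antitone hab) 2
  · rw [hψM, ← kronecker_mulVec_vec]
    congr 1
    ext ⟨i, j⟩
    simp only [vec, transpose_apply, D, rectDiagonal, of_apply]
    by_cases h : (i : ℕ) = j
    · rw [dif_pos ⟨h, lt_min i.isLt (h ▸ j.isLt)⟩, if_pos h,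
        Real.sqrt_sq (T.singularValues_nonneg _)]
      simp [h]
    · rw [dif_neg fun h' => h h'.1, if_neg h]

/-- Schmidt decomposition. Every bipartite pure (unit) vector is,
up to local unitaries, of the canonical diagonal form with nonincreasing
Schmidt coefficients `√(p k)`, `p` a nonincreasing probability vector on
`Fin (min d d')`. -/
theorem stmt_3 (d d' : ℕ) (hd : 1 ≤ d) (hd' : 1 ≤ d')
    (ψ : Fin d × Fin d' → ℂ) (hψ : ∑ x : Fin d × Fin d', ‖ψ x‖ ^ 2 = 1) :
    ∃ U ∈ Matrix.unitaryGroup (Fin d) ℂ, ∃ V ∈ Matrix.unitaryGroup (Fin d') ℂ,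
      ∃ p : Fin (min d d') → ℝ, (∀ k, 0 ≤ p k) ∧ (∑ k, p k = 1) ∧ Antitone p ∧
        ψ = (U ⊗ₖ V) *ᵥ (fun x : Fin d × Fin d' =>
          if h : (x.1 : ℕ) = (x.2 : ℕ) ∧ (x.1 : ℕ) < min d d'
          then (Real.sqrt (p ⟨x.1, h.2⟩) : ℂ) else 0) :=
  stmt_3_general d d' ψ hψ
end

section
/- Let m, n ≥ 1, let P be a probability vector on {1,…,m}, let H_n = Σ_{j=1}^n 1/j, and let z₁ ≥ z₂ ≥ … ≥ z_{mn} be the nonincreasing rearrangement of the mn values {P(i)/(j·H_n) : 1 ≤ i ≤ m, 1 ≤ j ≤ n}. Then z_k ≤ 1/(k·H_n) for every 1 ≤ k ≤ n. -/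
/-!
Fix `K = k + 1` and suppose `z_k > 1/(K·H_n)`. Since `z` is nonincreasing, the `K` largest values
`P(i)/(j·H_n)` all exceed `1/(K·H_n)`, i.e. satisfy `j < P(i)·K`. But for each `i` fewer than
`P(i)·K` (or none, if `P(i) = 0`) positive integers `j` satisfy `j < P(i)·K`, so summing over `i`
fewer than `∑ P(i)·K = K` pairs `(i, j)` qualify: a contradiction.
-/

/-- The `n`-th harmonic number `H_n = ∑_{j=1}^n 1/j`. -/
noncomputable def harm (n : ℕ) : ℝ := ∑ j ∈ Finset.range n, 1 / ((j : ℝ) + 1)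

open Finset

lemma card_lt_of_forall_succ_lt {n : ℕ} {x : ℝ} (hx : 0 < x) (s : Finset (Fin n))
    (hs : ∀ j ∈ s, ((j : ℕ) : ℝ) + 1 < x) : (#s : ℝ) < x := by
  have hceil : 1 ≤ ⌈x⌉₊ := Nat.one_le_iff_ne_zero.mpr (Nat.ceil_pos.mpr hx).ne'
  have hcard : #s ≤ ⌈x⌉₊ - 1 := by
    rw [← card_range (⌈x⌉₊ - 1)]
    refine card_le_card_of_injOn Fin.val (fun j hj => ?_) Fin.val_injective.injOn
    have : (((j : ℕ) + 1 : ℕ) : ℝ) < ⌈x⌉₊ := by exact_mod_cast (hs j hj).trans_le (Nat.le_ceil x)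
    rw [coe_range, Set.mem_Iio]
    exact Nat.lt_sub_of_add_lt (by exact_mod_cast this)
  calc (#s : ℝ) ≤ ((⌈x⌉₊ - 1 : ℕ) : ℝ) := by exact_mod_cast hcard
    _ = ⌈x⌉₊ - 1 := by push_cast [hceil]; ring
    _ < x := by linarith [Nat.ceil_lt_add_one hx.le]

lemma card_le_of_forall_succ_lt {n : ℕ} {x : ℝ} (hx : 0 ≤ x) (s : Finset (Fin n))
    (hs : ∀ j ∈ s, ((j : ℕ) : ℝ) + 1 < x) : (#s : ℝ) ≤ x := by
  rcases hx.eq_or_lt with rfl | hx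
  · have : s = ∅ := eq_empty_of_forall_notMem fun j hj => by
      linarith [hs j hj, (j : ℕ).cast_nonneg (α := ℝ)]
    simp [this]
  · exact (card_lt_of_forall_succ_lt hx s hs).le

lemma card_filter_succ_lt_mul_lt {ι : Type*} [Fintype ι] (n : ℕ) (P : ι → ℝ) (hP0 : ∀ i, 0 ≤ P i)
    (hP1 : ∑ i, P i = 1) {K : ℝ} (hK : 0 < K) :
    (#{p : ι × Fin n | ((p.2 : ℕ) : ℝ) + 1 < P p.1 * K} : ℝ) < K := by
  obtain ⟨i₀, -, hi₀⟩ : ∃ i ∈ univ, (0 : ι → ℝ) i < P i :=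
    exists_lt_of_sum_lt (by simp [hP1])
  calc (#{p : ι × Fin n | ((p.2 : ℕ) : ℝ) + 1 < P p.1 * K} : ℝ)
      = ∑ i, (#{j : Fin n | ((j : ℕ) : ℝ) + 1 < P i * K} : ℝ) := by
        rw [card_filter, Fintype.sum_prod_type]
        push_cast [card_filter]
        rfl
    _ < ∑ i, P i * K := by
        refine sum_lt_sum (fun i _ => card_le_of_forall_succ_lt
          (mul_nonneg (hP0 i) hK.le) _ fun j hj => (mem_filter.mp hj).2) ⟨i₀, mem_univ _, ?_⟩
        exact card_lt_of_forall_succ_lt (mul_pos hi₀ hK) _ fun j hj => (mem_filter.mp hj).2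
    _ = K := by rw [← sum_mul, hP1, one_mul]

lemma harm_pos {n : ℕ} (hn : 0 < n) : 0 < harm n :=
  sum_pos (fun j _ => by positivity) (nonempty_range_iff.mpr hn.ne')

theorem stmt_5_general (m n : ℕ)
    (P : Fin m → ℝ) (hP0 : ∀ i, 0 ≤ P i) (hP1 : ∑ i, P i = 1)
    (z : Fin (m * n) → ℝ) (hz : Antitone z)
    (e : Fin (m * n) ≃ Fin m × Fin n)
    (hze : ∀ k, z k = P (e k).1 / (((((e k).2 : ℕ) : ℝ) + 1) * harm n)) :
    ∀ k : Fin (m * n), (k : ℕ) < n → z k ≤ 1 / ((((k : ℕ) : ℝ) + 1) * harm n) := by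
  intro k hk
  have hH : 0 < harm n := harm_pos (by omega)
  set K : ℝ := ((k : ℕ) : ℝ) + 1
  have hK : 0 < K := by positivity
  by_contra! hzk
  have hlarge : ∀ l ≤ k, (((e l).2 : ℕ) : ℝ) + 1 < P (e l).1 * K := by
    intro l hl
    have := hzk.trans_le (hz hl)
    rw [hze l, div_lt_div_iff₀ (by positivity) (by positivity), one_mul, ← mul_assoc] at this
    exact lt_of_mul_lt_mul_right this hH.le
  have hcard : #(Iic k) ≤ #{p : Fin m × Fin n | ((p.2 : ℕ) : ℝ) + 1 < P p.1 * K} :=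
    card_le_card_of_injOn e (fun l hl => by simpa using hlarge l (mem_Iic.mp hl))
      e.injective.injOn
  rw [Fin.card_Iic] at hcard
  have hK_le : K ≤ #{p : Fin m × Fin n | ((p.2 : ℕ) : ℝ) + 1 < P p.1 * K} := by
    simpa [K] using (Nat.cast_le (α := ℝ)).mpr hcard
  exact hK_le.not_gt (card_filter_succ_lt_mul_lt n P hP0 hP1 hK)

/-- if `z` is the nonincreasing rearrangement of the `m·n` values
`P(i)/(j·H_n)`, then `z_k ≤ 1/(k·H_n)` for every `1 ≤ k ≤ n` (zero-indexed:
`z k ≤ 1/((k+1)·H_n)` for `k < n`). -/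
theorem stmt_5 (m n : ℕ) (hm : 1 ≤ m) (hn : 1 ≤ n)
    (P : Fin m → ℝ) (hP0 : ∀ i, 0 ≤ P i) (hP1 : ∑ i, P i = 1)
    (z : Fin (m * n) → ℝ) (hz : Antitone z)
    (e : Fin (m * n) ≃ Fin m × Fin n)
    (hze : ∀ k, z k = P (e k).1 / (((((e k).2 : ℕ) : ℝ) + 1) * harm n)) :
    ∀ k : Fin (m * n), (k : ℕ) < n → z k ≤ 1 / ((((k : ℕ) : ℝ) + 1) * harm n) :=
  stmt_5_general m n P hP0 hP1 z hz e hze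
end

section
/- Let m ≥ 1 and n ≥ 2 with n ≥ m, let H_k = Σ_{j=1}^k 1/j, and let t₁ ≥ t₂ ≥ … ≥ t_{mn} be the nonincreasing rearrangement of the mn values {1/(m·j·H_n) : 1 ≤ i ≤ m, 1 ≤ j ≤ n} (i.e., each value 1/(m·j·H_n) occurs with multiplicity m). Then Σ_{j=1}^n t_j ≥ H_{⌊n/m⌋}/H_n ≥ 1 − (ln m)/(ln n). -/
/-!
Write `q = ⌊n/m⌋`. The `m·q ≤ n` entries with `j ≤ q` sum to `H_q / H_n`, and an exchange
argument shows that no set of at most `n` entries of a nonnegative nonincreasing sequence beats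
its first `n` entries.

For the second inequality, comparing `1/(k+1)` with `log ((2k+3)/(2k+1))` gives
`H_n - H_q ≤ log ((2n+1)/(2q+1))`, and `2n+1 ≤ m(2q+1) + m - 1` turns this into
`H_n - H_q ≤ log m + (m-1)/(m(2q+1))`. Since `H_n - log n ≥ γ > 1/2`, the claim reduces to
`2(m-1) log n ≤ m(2q+1) log m`, which follows from `n < m(q+1)`.
-/

open Finset Real

lemma harm_eq_harmonic (n : ℕ) : harm n = harmonic n := by
  simp [harm, harmonic]

lemma harm_succ (n : ℕ) : harm (n + 1) = harm n + 1 / (n + 1) := by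
  simp [harm, sum_range_succ]

lemma log_add_one_half_le_harm {n : ℕ} (hn : n ≠ 0) : log n + 1 / 2 ≤ harm n := by
  have h := one_half_lt_eulerMascheroniConstant.trans
    (eulerMascheroniConstant_lt_eulerMascheroniSeq' n)
  rw [eulerMascheroniSeq', if_neg hn] at h
  rw [harm_eq_harmonic]
  linarith

lemma two_mul_sub_one_div_add_one_le_log {x : ℝ} (hx : 1 ≤ x) :
    2 * (x - 1) / (x + 1) ≤ log x := by
  rcases hx.eq_or_lt with rfl | hx
  · simp
  have hx' : 0 < x - 1 := sub_pos.2 hx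
  have h := le_hasSum (hasSum_log_one_add_inv (inv_pos.2 hx')) 0 fun j _ => by positivity
  rw [inv_inv, add_sub_cancel] at h
  refine le_of_eq_of_le ?_ h
  have : x - 1 ≠ 0 := hx'.ne'
  norm_num
  field_simp
  ring

lemma harm_sub_harm_le_log_sub_log {q n : ℕ} (h : q ≤ n) :
    harm n - harm q ≤ log (2 * n + 1) - log (2 * q + 1) := by
  induction n, h using Nat.le_induction with
  | base => simp
  | succ n _ ih =>
    have hstep := two_mul_sub_one_div_add_one_le_log (x := (2 * n + 3) / (2 * n + 1))
      (by rw [le_div_iff₀ (by positivity)]; linarith)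
    rw [log_div (by positivity) (by positivity)] at hstep
    have hval : 2 * ((2 * (n : ℝ) + 3) / (2 * n + 1) - 1) / ((2 * n + 3) / (2 * n + 1) + 1)
        = 1 / (n + 1) := by
      field_simp; ring
    rw [harm_succ]
    push_cast
    rw [show 2 * ((n : ℝ) + 1) + 1 = 2 * n + 3 by ring]
    linarith

lemma log_le_div_two {x : ℝ} (hx : 0 < x) : log x ≤ x / 2 := by
  have h := log_le_sub_one_of_pos (div_pos hx (exp_pos 1))
  rw [log_div hx.ne' (exp_pos 1).ne', log_exp] at h
  have he : 2 ≤ exp 1 := by linarith [add_one_le_exp (1 : ℝ)]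
  have : x / exp 1 ≤ x / 2 := div_le_div_of_nonneg_left hx.le two_pos he
  linarith

lemma two_mul_sub_one_mul_log_le {m q x : ℝ} (hm : 1 ≤ m) (hq : 1 ≤ q) (hx : 0 < x)
    (hxm : x ≤ m * (q + 1)) : 2 * (m - 1) * log x ≤ m * (2 * q + 1) * log m := by
  have hlogx : log x ≤ log m + log (q + 1) := by
    rw [← log_mul (by positivity) (by positivity)]
    exact log_le_log hx hxm
  have hq1 := log_le_div_two (show 0 < q + 1 by positivity)
  have hpade := two_mul_sub_one_div_add_one_le_log hm
  rw [div_le_iff₀ (by positivity)] at hpade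
  have hm1 : 0 ≤ m - 1 := by linarith
  have hkey : (m - 1) * (q + 1) ≤ (2 * m * q - m + 2) * log m := by
    refine le_of_mul_le_mul_left ?_ (by positivity : 0 < m + 1)
    calc (m + 1) * ((m - 1) * (q + 1))
        ≤ 2 * (m - 1) * (2 * m * q - m + 2) := by
          -- `2 (2mq - m + 2) - (m + 1)(q + 1) = (3m - 1)(q - 1) + 2`
          nlinarith [mul_nonneg hm1 (mul_nonneg (by linarith : 0 ≤ 3 * m - 1) (sub_nonneg.2 hq))]
      _ ≤ (m + 1) * ((2 * m * q - m + 2) * log m) := by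
          nlinarith [mul_le_mul_of_nonneg_right hpade (by nlinarith : 0 ≤ 2 * m * q - m + 2)]
  nlinarith [mul_le_mul_of_nonneg_left hlogx (by positivity : 0 ≤ 2 * (m - 1)),
    mul_le_mul_of_nonneg_left hq1 hm1]

lemma harm_sub_harm_div_mul_log_le {m n : ℕ} (hm : 1 ≤ m) (hmn : m ≤ n) :
    (harm n - harm (n / m)) * log n ≤ log m * harm n := by
  set q := n / m
  have hq : 1 ≤ q := (Nat.one_le_div_iff hm).2 hmn
  have hnq : (n : ℝ) + 1 ≤ m * (q + 1) := by exact_mod_cast Nat.lt_mul_div_succ n hm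
  have hm' : (1 : ℝ) ≤ m := by exact_mod_cast hm
  have hK : 0 < (m : ℝ) * (2 * q + 1) := by positivity
  have hexcess : (harm n - harm q - log m) * (m * (2 * q + 1)) ≤ m - 1 := by
    have hD := harm_sub_harm_le_log_sub_log (Nat.div_le_self n m)
    have hlog := log_le_sub_one_of_pos (x := (2 * n + 1) / (m * (2 * q + 1))) (by positivity)
    rw [log_div (by positivity) hK.ne', log_mul (by positivity) (by positivity),
      div_sub_one hK.ne', le_div_iff₀ hK] at hlog
    nlinarith
  have hlogn : 2 * (m - 1) * log n ≤ m * (2 * q + 1) * log m :=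
    two_mul_sub_one_mul_log_le hm' (by exact_mod_cast hq) (Nat.cast_pos.2 (by omega))
      (by linarith)
  have hH := log_add_one_half_le_harm (n := n) (by omega)
  have hL : 0 ≤ log n := log_natCast_nonneg n
  have hM : 0 ≤ log m := log_nonneg hm'
  refine le_of_mul_le_mul_left ?_ hK
  nlinarith [mul_le_mul_of_nonneg_right hexcess hL,
    mul_le_mul_of_nonneg_left hH (mul_nonneg hK.le hM)]

lemma sum_le_sum_of_card_le_of_forall_sdiff_le {ι M : Type*} [DecidableEq ι] [AddCommMonoid M]
    [LinearOrder M] [IsOrderedAddMonoid M] {f : ι → M} {s t : Finset ι} (hst : #s ≤ #t)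
    (hf : ∀ i ∈ s \ t, ∀ j ∈ t \ s, f i ≤ f j) (h0 : ∀ j ∈ t \ s, 0 ≤ f j) :
    ∑ i ∈ s, f i ≤ ∑ i ∈ t, f i := by
  rw [← sum_inter_add_sum_sdiff s t, ← sum_inter_add_sum_sdiff t s, inter_comm]
  refine add_le_add le_rfl ?_
  have hcard : #(s \ t) ≤ #(t \ s) := card_sdiff_le_card_sdiff_iff.2 hst
  rcases (t \ s).eq_empty_or_nonempty with hts | hts
  · rw [hts, card_empty, Nat.le_zero, card_eq_zero] at hcard
    simp [hts, hcard]
  set c := (t \ s).inf' hts f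
  calc ∑ i ∈ s \ t, f i ≤ #(s \ t) • c :=
        sum_le_card_nsmul _ _ _ fun i hi => le_inf' _ _ (hf i hi)
    _ ≤ #(t \ s) • c := nsmul_le_nsmul_left (le_inf' _ _ h0) hcard
    _ ≤ ∑ j ∈ t \ s, f j := card_nsmul_le_sum _ _ _ fun j hj => inf'_le _ hj

lemma Antitone.sum_le_sum_filter_val_lt {N n : ℕ} {t : Fin N → ℝ} (ht : Antitone t)
    (h0 : ∀ k, 0 ≤ t k) {s : Finset (Fin N)} (hs : #s ≤ n) :
    ∑ k ∈ s, t k ≤ ∑ k ∈ univ.filter (fun k : Fin N => (k : ℕ) < n), t k := by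
  refine sum_le_sum_of_card_le_of_forall_sdiff_le ?_ (fun i hi j hj => ht ?_) (fun j _ => h0 j)
  · rw [Fin.card_filter_val_lt]
    exact le_min (card_le_univ s |>.trans (Fintype.card_fin N).le) hs
  · simp only [mem_sdiff, mem_filter, mem_univ, true_and] at hi hj
    exact Fin.le_def.2 (by omega)

lemma sum_filter_snd_lt {ι M : Type*} [Fintype ι] [AddCommMonoid M] {m n q : ℕ} (hq : q ≤ n)
    (e : ι ≃ Fin m × Fin n) (g : ℕ → M) :
    ∑ k ∈ univ.filter (fun k => ((e k).2 : ℕ) < q), g (e k).2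
      = m • ∑ j ∈ range q, g j := by
  rw [sum_filter, e.sum_comp (fun p => if (p.2 : ℕ) < q then g p.2 else 0),
    Fintype.sum_prod_type]
  simp only [sum_const, card_univ, Fintype.card_fin]
  rw [Fin.sum_univ_eq_sum_range (fun j => if j < q then g j else 0), ← sum_filter]
  congr 2
  ext j
  simp only [mem_filter, mem_range]
  omega

/-- if `t` is the nonincreasing rearrangement of the `m·n` values
`1/(m·j·H_n)` (each with multiplicity `m`), then the sum of its first `n`
entries is at least `H_{⌊n/m⌋}/H_n`, which is at least `1 - ln m / ln n`. -/
theorem stmt_6 (m n : ℕ) (hm : 1 ≤ m) (hn : 2 ≤ n) (hmn : m ≤ n)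
    (t : Fin (m * n) → ℝ) (ht : Antitone t)
    (e : Fin (m * n) ≃ Fin m × Fin n)
    (hte : ∀ k, t k = 1 / ((m : ℝ) * ((((e k).2 : ℕ) : ℝ) + 1) * harm n)) :
    harm (n / m) / harm n ≤
      ∑ k ∈ Finset.univ.filter (fun k : Fin (m * n) => (k : ℕ) < n), t k
    ∧ 1 - Real.log m / Real.log n ≤ harm (n / m) / harm n := by
  have hL : 0 < log n := log_pos (by exact_mod_cast hn)
  have hH : 0 < harm n := by linarith [log_add_one_half_le_harm (n := n) (by omega)]
  have hq : n / m ≤ n := Nat.div_le_self n m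
  refine ⟨?_, ?_⟩
  · have hcard : #(univ.filter (fun k => ((e k).2 : ℕ) < n / m)) = m * (n / m) := by
      rw [card_eq_sum_ones, sum_filter_snd_lt hq e fun _ => 1]
      simp
    have hsum : ∑ k ∈ univ.filter (fun k => ((e k).2 : ℕ) < n / m), t k
        = harm (n / m) / harm n := by
      rw [sum_congr rfl fun k _ => hte k,
        sum_filter_snd_lt hq e fun j => 1 / (m * ((j : ℝ) + 1) * harm n),
        harm.eq_1 (n / m), sum_div, nsmul_eq_mul, mul_sum]
      refine sum_congr rfl fun j _ => ?_
      field_simp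
    rw [← hsum]
    exact ht.sum_le_sum_filter_val_lt (fun k => by rw [hte k]; positivity)
      (hcard.trans_le (Nat.mul_div_le n m))
  · rw [one_sub_div hL.ne', div_le_div_iff₀ hL hH]
    linarith [harm_sub_harm_div_mul_log_le hm hmn]
end

section
/- Let p be a probability vector on Fin a and q a probability vector on Fin b (a, b ≥ 1). Suppose that there is no probability vector p' on Fin (a·b) such that the nonincreasing rearrangement of the product vector p⊗p' coincides (after padding the shorter vector with zeros) with the nonincreasing rearrangement q↓ of q. Then there exists ε > 0 such that for every probability vector p' on Fin (a·b), (Σ_i √( q↓(i) · (p⊗p')↓(i) ))² ≤ 1 − ε. (Unless the seed state is, up to local unitaries, the target state tensored with some pure state, exact zero-communication conversion is impossible: the achievable fidelity is bounded away from 1.) -/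
/-- A probability vector on `Fin c`. -/
def IsProbVec {c : ℕ} (p : Fin c → ℝ) : Prop := (∀ i, 0 ≤ p i) ∧ ∑ i, p i = 1

/-- `w : ℕ → ℝ` is the nonincreasing rearrangement of the finite vector `v`,
padded with zeros. -/
def IsSortedPadOf {ι : Type} [Fintype ι] (v : ι → ℝ) (w : ℕ → ℝ) : Prop :=
  Antitone w ∧ (∀ k, Fintype.card ι ≤ k → w k = 0) ∧
    ∃ e : Fin (Fintype.card ι) ≃ ι, ∀ k : Fin (Fintype.card ι), w (k : ℕ) = v (e k)


/-!
The fidelity is a continuous function of the ancilla `p'` on the compact simplex, because the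
`k`-th largest entry of a vector is a max of mins of its entries. At every `p'` it is `< 1`: the
Bhattacharyya coefficient of two probability vectors is `1` only when they are equal, and equality
of the sorted vectors is exactly what `hno` rules out. Hence its maximum over the simplex is `< 1`.
-/

open Finset

lemma sq_sum_sqrt_mul_lt_one {α : Type*} {s : Finset α} {v u : α → ℝ}
    (hv : ∀ i ∈ s, 0 ≤ v i) (hu : ∀ i ∈ s, 0 ≤ u i)
    (hv₁ : ∑ i ∈ s, v i = 1) (hu₁ : ∑ i ∈ s, u i = 1) (hne : ∃ i ∈ s, v i ≠ u i) :
    (∑ i ∈ s, √(v i * u i)) ^ 2 < 1 := by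
  have hterm : ∀ i ∈ s, (√(v i) - √(u i)) ^ 2 = v i + u i - 2 * √(v i * u i) := fun i hi => by
    rw [Real.sqrt_mul (hv i hi), sub_sq, Real.sq_sqrt (hv i hi), Real.sq_sqrt (hu i hi)]
    ring
  have hdist : ∑ i ∈ s, (√(v i) - √(u i)) ^ 2 = 2 - 2 * ∑ i ∈ s, √(v i * u i) := by
    rw [sum_congr rfl hterm, sum_sub_distrib, sum_add_distrib, ← mul_sum, hv₁, hu₁]
    ring
  have hpos : 0 < ∑ i ∈ s, (√(v i) - √(u i)) ^ 2 := by
    obtain ⟨i, hi, hvu⟩ := hne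
    refine sum_pos' (fun _ _ => sq_nonneg _) ⟨i, hi, sq_pos_of_ne_zero (sub_ne_zero.2 ?_)⟩
    exact fun h => hvu ((Real.sqrt_inj (hv i hi) (hu i hi)).1 h)
  have hnonneg : 0 ≤ ∑ i ∈ s, √(v i * u i) := sum_nonneg fun _ _ => Real.sqrt_nonneg _
  nlinarith

lemma IsCompact.exists_lt_forall_le_of_forall_lt {X : Type*} [TopologicalSpace X] {K : Set X}
    (hK : IsCompact K) {f : X → ℝ} (hf : ContinuousOn f K) {c : ℝ} (h : ∀ x ∈ K, f x < c) :
    ∃ c' < c, ∀ x ∈ K, f x ≤ c' := by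
  rcases K.eq_empty_or_nonempty with rfl | hne
  · exact ⟨c - 1, by linarith, by simp⟩
  · obtain ⟨x₀, hx₀, hmax⟩ := hK.exists_isMaxOn hne hf
    exact ⟨f x₀, h x₀ hx₀, hmax⟩

/-- Entries are counted from `0`. Writing it as a max over `(k+1)`-subsets of their minima makes
its continuity in `x` evident; it is `0` for `k ≥ card ι`. -/
noncomputable def kthLargest {ι : Type*} [Fintype ι] (x : ι → ℝ) (k : ℕ) : ℝ :=
  if h : (univ.powersetCard (k + 1)).Nonempty then
    (univ.powersetCard (k + 1)).sup' h fun S => if hS : S.Nonempty then S.inf' hS x else 0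
  else 0

lemma continuous_kthLargest {X ι : Type*} [TopologicalSpace X] [Fintype ι] {f : X → ι → ℝ}
    (hf : Continuous f) (k : ℕ) : Continuous fun y => kthLargest (f y) k := by
  unfold kthLargest
  by_cases h : (univ.powersetCard (k + 1) : Finset (Finset ι)).Nonempty
  · simp only [dif_pos h]
    refine Continuous.finset_sup'_apply h fun S _ => ?_
    by_cases hS : S.Nonempty
    · simp only [dif_pos hS]
      exact Continuous.finset_inf'_apply hS fun i _ => (continuous_apply i).comp hf
    · simp only [dif_neg hS, continuous_const]
  · simp only [dif_neg h, continuous_const]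

namespace IsSortedPadOf

variable {ι : Type} [Fintype ι] {x : ι → ℝ} {w : ℕ → ℝ}

lemma nonneg (hx : ∀ i, 0 ≤ x i) (hw : IsSortedPadOf x w) (k : ℕ) : 0 ≤ w k := by
  obtain ⟨-, hzero, e, he⟩ := hw
  by_cases hk : k < Fintype.card ι
  · simpa [he ⟨k, hk⟩] using hx (e ⟨k, hk⟩)
  · rw [hzero k (not_lt.1 hk)]

lemma sum_range (hw : IsSortedPadOf x w) {N : ℕ} (hN : Fintype.card ι ≤ N) :
    ∑ k ∈ range N, w k = ∑ i, x i := by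
  obtain ⟨-, hzero, e, he⟩ := hw
  rw [← sum_subset (range_subset_range.2 hN) fun k _ hk => hzero k (by simpa using hk),
    ← Fin.sum_univ_eq_sum_range, ← e.sum_comp]
  exact sum_congr rfl fun k _ => he k

lemma kthLargest_eq (hw : IsSortedPadOf x w) (k : ℕ) : kthLargest x k = w k := by
  obtain ⟨hanti, hzero, e, he⟩ := hw
  by_cases hk : k < Fintype.card ι
  swap
  · rw [kthLargest, dif_neg (by simpa [powersetCard_nonempty] using hk), hzero k (not_lt.1 hk)]
  rw [kthLargest, dif_pos (powersetCard_nonempty.2 (by simpa using hk))]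
  apply le_antisymm
  · refine sup'_le _ _ fun S hS => ?_
    obtain ⟨-, hcard⟩ := mem_powersetCard.1 hS
    -- pigeonhole: `k + 1` distinct positions cannot all lie below `k`
    obtain ⟨i, hiS, hik⟩ : ∃ i ∈ S, k ≤ (e.symm i : ℕ) := by
      by_contra! h
      have := card_le_card_of_injOn (fun i => (e.symm i : ℕ)) (fun i hi => mem_range.2 (h i hi))
        (Fin.val_injective.comp e.symm.injective).injOn
      simp only [hcard, card_range] at this
      omega
    have hSne : S.Nonempty := ⟨i, hiS⟩
    rw [dif_pos hSne]
    calc S.inf' hSne x ≤ x i := inf'_le _ hiS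
      _ = w (e.symm i) := by rw [he, e.apply_symm_apply]
      _ ≤ w k := hanti hik
  · set S₀ := univ.map ((Fin.castLEEmb hk).trans e.toEmbedding)
    have hS₀ : S₀ ∈ univ.powersetCard (k + 1) := mem_powersetCard.2 ⟨subset_univ _, by simp [S₀]⟩
    have hS₀ne : S₀.Nonempty := ⟨_, mem_map_of_mem _ (mem_univ 0)⟩
    refine le_sup'_of_le _ hS₀ ?_
    rw [dif_pos hS₀ne]
    refine le_inf' _ _ fun i hi => ?_
    obtain ⟨j, -, rfl⟩ := mem_map.1 hi
    simpa [← he] using hanti (Nat.le_of_lt_succ j.isLt)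

lemma eq_kthLargest (hw : IsSortedPadOf x w) : w = kthLargest x :=
  funext fun k => (hw.kthLargest_eq k).symm

lemma sq_sum_sqrt_mul_lt_one {κ : Type} [Fintype κ] {y : κ → ℝ} {w' : ℕ → ℝ}
    (hx : ∀ i, 0 ≤ x i) (hy : ∀ i, 0 ≤ y i)
    (hx₁ : ∑ i, x i = 1) (hy₁ : ∑ i, y i = 1) (hw : IsSortedPadOf x w) (hw' : IsSortedPadOf y w')
    {N : ℕ} (hxN : Fintype.card ι ≤ N) (hyN : Fintype.card κ ≤ N) (hne : w ≠ w') :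
    (∑ i ∈ range N, √(w i * w' i)) ^ 2 < 1 := by
  refine _root_.sq_sum_sqrt_mul_lt_one (fun k _ => hw.nonneg hx k) (fun k _ => hw'.nonneg hy k)
    (hw.sum_range hxN ▸ hx₁) (hw'.sum_range hyN ▸ hy₁) ?_
  contrapose! hne
  funext k
  by_cases hk : k < N
  · exact hne k (mem_range.2 hk)
  · rw [hw.2.1 k (by omega), hw'.2.1 k (by omega)]

end IsSortedPadOf

lemma exists_isSortedPadOf {ι : Type} [Fintype ι] {x : ι → ℝ} (hx : ∀ i, 0 ≤ x i) :
    ∃ w, IsSortedPadOf x w := by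
  set n := Fintype.card ι
  set e : Fin n ≃ ι := (Fintype.equivFin ι).symm
  set σ := Tuple.sort (OrderDual.toDual ∘ x ∘ e)
  have hσ : Antitone (x ∘ e ∘ σ) :=
    monotone_toDual_comp_iff.1 (Tuple.monotone_sort (OrderDual.toDual ∘ x ∘ e))
  refine ⟨fun k => if h : k < n then x (e (σ ⟨k, h⟩)) else 0,
    antitone_nat_of_succ_le fun k => ?_, fun k hk => dif_neg (not_lt.2 hk),
    σ.trans e, fun k => dif_pos k.isLt⟩
  by_cases hk : k + 1 < n
  · rw [dif_pos hk, dif_pos (Nat.lt_of_succ_lt hk)]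
    exact hσ (Fin.mk_le_mk.2 k.le_succ)
  · rw [dif_neg hk]
    split_ifs
    exacts [hx _, le_rfl]

lemma isSortedPadOf_kthLargest {ι : Type} [Fintype ι] {x : ι → ℝ} (hx : ∀ i, 0 ≤ x i) :
    IsSortedPadOf x (kthLargest x) := by
  obtain ⟨w, hw⟩ := exists_isSortedPadOf hx
  exact hw.eq_kthLargest ▸ hw

theorem stmt_9_general (a b : ℕ)
    (p : Fin a → ℝ) (q : Fin b → ℝ) (hp : IsProbVec p) (hq : IsProbVec q)
    (hno : ¬ ∃ (p' : Fin (a * b) → ℝ) (w : ℕ → ℝ), IsProbVec p' ∧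
      IsSortedPadOf (fun x : Fin a × Fin (a * b) => p x.1 * p' x.2) w ∧
      IsSortedPadOf q w) :
    ∃ ε > 0, ∀ p' : Fin (a * b) → ℝ, IsProbVec p' →
      ∀ u v : ℕ → ℝ,
        IsSortedPadOf (fun x : Fin a × Fin (a * b) => p x.1 * p' x.2) u →
        IsSortedPadOf q v →
        (∑ i ∈ Finset.range (a * (a * b) + b), Real.sqrt (v i * u i)) ^ 2 ≤ 1 - ε := by
  set N := a * (a * b) + b
  set P : (Fin (a * b) → ℝ) → Fin a × Fin (a * b) → ℝ := fun p' x => p x.1 * p' x.2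
  set F : (Fin (a * b) → ℝ) → ℝ :=
    fun p' => (∑ i ∈ range N, √(kthLargest q i * kthLargest (P p') i)) ^ 2
  have hF : Continuous F := by
    have hP : Continuous P := continuous_pi fun x => continuous_const.mul (continuous_apply x.2)
    exact (continuous_finsetSum _ fun i _ =>
      (continuous_const.mul (continuous_kthLargest hP i)).sqrt).pow 2
  have hF_lt : ∀ p' ∈ stdSimplex ℝ (Fin (a * b)), F p' < 1 := by
    intro p' hp'
    have hP₀ : ∀ x, 0 ≤ P p' x := fun x => mul_nonneg (hp.1 _) (hp'.1 _)
    have hP₁ : ∑ x, P p' x = 1 := by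
      rw [Fintype.sum_prod_type, ← Fintype.sum_mul_sum, hp.2, hp'.2, one_mul]
    refine (isSortedPadOf_kthLargest hq.1).sq_sum_sqrt_mul_lt_one hq.1 hP₀ hq.2 hP₁
      (isSortedPadOf_kthLargest hP₀) (by simp [N]) (by simp [N]) fun h => hno ?_
    exact ⟨p', kthLargest q, hp', h ▸ isSortedPadOf_kthLargest hP₀,
      isSortedPadOf_kthLargest hq.1⟩
  obtain ⟨c, hc, hFc⟩ := (isCompact_stdSimplex ℝ (Fin (a * b))).exists_lt_forall_le_of_forall_lt
    hF.continuousOn hF_lt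
  refine ⟨1 - c, by linarith, fun p' hp' u v hu hv => ?_⟩
  rw [hu.eq_kthLargest, hv.eq_kthLargest]
  linarith [hFc p' hp']

/-- if no ancilla distribution `p'` makes the sorted (zero-padded)
product `p ⊗ p'` coincide with the sorted (zero-padded) `q`, then the
zero-communication conversion fidelity is bounded away from `1` uniformly
over ancilla distributions. -/
theorem stmt_9 (a b : ℕ) (ha : 1 ≤ a) (hb : 1 ≤ b)
    (p : Fin a → ℝ) (q : Fin b → ℝ) (hp : IsProbVec p) (hq : IsProbVec q)
    (hno : ¬ ∃ (p' : Fin (a * b) → ℝ) (w : ℕ → ℝ), IsProbVec p' ∧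
      IsSortedPadOf (fun x : Fin a × Fin (a * b) => p x.1 * p' x.2) w ∧
      IsSortedPadOf q w) :
    ∃ ε > 0, ∀ p' : Fin (a * b) → ℝ, IsProbVec p' →
      ∀ u v : ℕ → ℝ,
        IsSortedPadOf (fun x : Fin a × Fin (a * b) => p x.1 * p' x.2) u →
        IsSortedPadOf q v →
        (∑ i ∈ Finset.range (a * (a * b) + b), Real.sqrt (v i * u i)) ^ 2 ≤ 1 - ε :=
  stmt_9_general a b p q hp hq hno
end

section
/- Let q be a nonincreasing probability vector on Fin N (N ≥ 1), let k ≥ 1, set L = ⌈N/k⌉, and for 1 ≤ i ≤ L define α_i = Σ_{j=(i−1)k+1}^{min(i·k, N)} √(q j). Let u denote the uniform probability vector on Fin k. Then: (1) for every nonincreasing probability vector p' on Fin L, Σ_{j=1}^{N} √( q(j) · (u⊗p')↓(j) ) = k^{−1/2} · Σ_{i=1}^{L} α_i·√(p' i); and (2) the supremum over all probability vectors p' on arbitrary finite index sets of (Σ_j √( q↓(j) · (u⊗p')↓(j) ))² equals k^{−1} times the supremum over nonincreasing probability vectors p' on Fin L of (Σ_{i=1}^{L} α_i √(p' i))². (This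 expresses the optimal zero-communication distillation fidelity into a k-dimensional maximally entangled state as a finite-dimensional optimization.) -/
open Finset

theorem exists_perm_antitone {c : ℕ} (p : Fin c → ℝ) :
    ∃ σ : Equiv.Perm (Fin c), Antitone (p ∘ σ) :=
  ⟨Fin.revPerm.trans (Tuple.sort p), fun _ _ hab => Tuple.monotone_sort p (Fin.rev_le_rev.mpr hab)⟩

theorem IsSortedPadOf.unique {ι : Type} [Fintype ι] {v : ι → ℝ} {w w' : ℕ → ℝ}
    (h : IsSortedPadOf v w) (h' : IsSortedPadOf v w') : w = w' := by
  obtain ⟨ha, hz, e, he⟩ := h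
  obtain ⟨ha', hz', e', he'⟩ := h'
  have hperm : v ∘ e ∘ Equiv.refl _ = v ∘ e ∘ (e'.trans e.symm) := by
    refine Tuple.unique_antitone (f := v ∘ e) ?_ ?_
    · intro i j hij
      simpa [← he] using ha (show (i : ℕ) ≤ j from hij)
    · intro i j hij
      simpa [← he'] using ha' (show (i : ℕ) ≤ j from hij)
  funext j
  by_cases hj : j < Fintype.card ι
  · simpa [← he, ← he'] using congrFun hperm ⟨j, hj⟩
  · rw [hz j (not_lt.mp hj), hz' j (not_lt.mp hj)]

theorem IsSortedPadOf.comp_perm {ι : Type} [Fintype ι] {v : ι → ℝ} {w : ℕ → ℝ}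
    (h : IsSortedPadOf v w) (π : Equiv.Perm ι) : IsSortedPadOf (v ∘ π) w := by
  obtain ⟨ha, hz, e, he⟩ := h
  exact ⟨ha, hz, e.trans π.symm, fun j => by simpa using he j⟩

def zeroPad {c : ℕ} (p : Fin c → ℝ) (i : ℕ) : ℝ := if h : i < c then p ⟨i, h⟩ else 0

section zeroPad

variable {c : ℕ} {p : Fin c → ℝ}

@[simp]
theorem zeroPad_val (p : Fin c → ℝ) (i : Fin c) : zeroPad p i = p i := by
  simp [zeroPad]

theorem zeroPad_of_le (p : Fin c → ℝ) {i : ℕ} (hi : c ≤ i) : zeroPad p i = 0 := by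
  simp [zeroPad, not_lt.mpr hi]

theorem zeroPad_nonneg (hp : ∀ i, 0 ≤ p i) (i : ℕ) : 0 ≤ zeroPad p i := by
  unfold zeroPad; split
  exacts [hp _, le_rfl]

theorem antitone_zeroPad (hp : ∀ i, 0 ≤ p i) (hpa : Antitone p) : Antitone (zeroPad p) := by
  intro a b hab
  by_cases hb : b < c
  · rw [zeroPad, zeroPad, dif_pos hb, dif_pos (hab.trans_lt hb)]
    exact hpa (show (⟨a, hab.trans_lt hb⟩ : Fin c) ≤ ⟨b, hb⟩ from hab)
  · rw [zeroPad_of_le p (not_lt.mp hb)]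
    exact zeroPad_nonneg hp a

theorem sum_range_zeroPad (p : Fin c → ℝ) {m : ℕ} (hm : c ≤ m) :
    ∑ i ∈ range m, zeroPad p i = ∑ i, p i := by
  rw [← sum_range_add_sum_Ico _ hm, sum_range]
  simp [sum_eq_zero fun i hi => zeroPad_of_le p (mem_Ico.mp hi).1]

theorem sum_range_zeroPad_le (hp : ∀ i, 0 ≤ p i) (m : ℕ) :
    ∑ i ∈ range m, zeroPad p i ≤ ∑ i, p i := by
  rw [← sum_range_zeroPad p (le_max_right m c)]
  exact sum_le_sum_of_subset_of_nonneg (range_subset_range.mpr (le_max_left m c))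
    fun i _ _ => zeroPad_nonneg hp i

theorem sum_range_zeroPad_comp (F : ℕ → ℝ → ℝ) (p : Fin c → ℝ) :
    ∑ i ∈ range c, F i (zeroPad p i) = ∑ i : Fin c, F i (p i) := by
  simp [sum_range]

end zeroPad

theorem isSortedPadOf_const_mul {k c : ℕ} (hk : 0 < k) {a : ℝ} (ha : 0 ≤ a) {p : Fin c → ℝ}
    (hp : ∀ i, 0 ≤ p i) (hpa : Antitone p) :
    IsSortedPadOf (fun x : Fin k × Fin c => a * p x.2) (fun j => a * zeroPad p (j / k)) := by
  have hcard : Fintype.card (Fin k × Fin c) = c * k := by simp [mul_comm]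
  refine ⟨fun i j hij => mul_le_mul_of_nonneg_left
      (antitone_zeroPad hp hpa (Nat.div_le_div_right hij)) ha, fun j hj => ?_, ?_⟩
  · rw [hcard] at hj
    simp only [zeroPad_of_le p ((Nat.le_div_iff_mul_le hk).mpr hj), mul_zero]
  · refine ⟨(finCongr hcard).trans (finProdFinEquiv.symm.trans (Equiv.prodComm _ _)), fun j => ?_⟩
    have hj : (j : ℕ) / k < c := (Nat.div_lt_iff_lt_mul hk).mpr (hcard ▸ j.isLt)
    simp only [Equiv.trans_apply, Equiv.prodComm_apply, Prod.snd_swap, zeroPad, dif_pos hj]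
    rfl

def blockSum (F : ℕ → ℝ) (N k i : ℕ) : ℝ := ∑ j ∈ Ico (i * k) (min ((i + 1) * k) N), F j

theorem filter_range_div_eq_Ico {k : ℕ} (hk : 0 < k) (N i : ℕ) :
    {j ∈ range N | j / k = i} = Ico (i * k) (min ((i + 1) * k) N) := by
  ext j
  have hle : i ≤ j / k ↔ i * k ≤ j := Nat.le_div_iff_mul_le hk
  have hlt : j / k < i + 1 ↔ j < (i + 1) * k := Nat.div_lt_iff_lt_mul hk
  simp only [mem_filter, mem_range, mem_Ico, lt_min_iff]
  omega

theorem sum_range_mul_div_eq_sum_blockSum {N k L : ℕ} (hk : 0 < k) (hNL : N ≤ L * k)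
    (F G : ℕ → ℝ) :
    ∑ j ∈ range N, F j * G (j / k) = ∑ i ∈ range L, blockSum F N k i * G i := by
  have hmaps : ∀ j ∈ range N, j / k ∈ range L := fun j hj =>
    mem_range.mpr ((Nat.div_lt_iff_lt_mul hk).mpr ((mem_range.mp hj).trans_le hNL))
  rw [← sum_fiberwise_of_maps_to hmaps]
  refine sum_congr rfl fun i _ => ?_
  rw [blockSum, sum_mul, ← filter_range_div_eq_Ico hk]
  exact sum_congr rfl fun j hj => by rw [(mem_filter.mp hj).2]

theorem sum_sqrt_mul_sortedPad {N k c L : ℕ} (hk : 0 < k) (hNL : N ≤ L * k) {q : Fin N → ℝ}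
    (hq : ∀ j, 0 ≤ q j) {p : Fin c → ℝ} (hp : ∀ i, 0 ≤ p i) (hpa : Antitone p) {w : ℕ → ℝ}
    (hw : IsSortedPadOf (fun x : Fin k × Fin c => (1 / (k : ℝ)) * p x.2) w) :
    ∑ j : Fin N, √(q j * w j) =
      (√k)⁻¹ * ∑ i ∈ range L, blockSum (fun j => √(zeroPad q j)) N k i * √(zeroPad p i) := by
  rw [hw.unique (isSortedPadOf_const_mul hk (by positivity) hp hpa),
    ← sum_range_mul_div_eq_sum_blockSum hk hNL, mul_sum,
    ← sum_range_zeroPad_comp (fun j x => √(x * ((1 / (k : ℝ)) * zeroPad p (j / k)))) q]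
  refine sum_congr rfl fun j _ => ?_
  rw [one_div, mul_left_comm, Real.sqrt_mul (inv_nonneg.mpr (Nat.cast_nonneg k)),
    Real.sqrt_mul (zeroPad_nonneg hq j), Real.sqrt_inv]

theorem exists_antitone_probVec_zeroPad_le {c L : ℕ} (hL : 0 < L) {p : Fin c → ℝ}
    (hp : IsProbVec p) (hpa : Antitone p) :
    ∃ P : Fin L → ℝ, IsProbVec P ∧ Antitone P ∧ ∀ i : Fin L, zeroPad p i ≤ P i := by
  obtain ⟨L, rfl⟩ := Nat.exists_eq_add_one_of_ne_zero hL.ne'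
  set r := 1 - ∑ i ∈ range (L + 1), zeroPad p i with hr_def
  have hr : 0 ≤ r := sub_nonneg.mpr (hp.2 ▸ sum_range_zeroPad_le hp.1 _)
  set e : Fin (L + 1) → ℝ := Pi.single 0 r
  have he (i : Fin (L + 1)) : 0 ≤ e i := by
    by_cases hi : i = 0
    · simp [e, hi, hr]
    · simp [e, hi]
  refine ⟨fun i => zeroPad p i + e i, ⟨fun i => add_nonneg (zeroPad_nonneg hp.1 i) (he i), ?_⟩,
    fun i j hij => add_le_add (antitone_zeroPad hp.1 hpa hij) ?_,
    fun i => le_add_of_nonneg_right (he i)⟩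
  · rw [sum_add_distrib, sum_pi_single', ← sum_range (zeroPad p), if_pos (mem_univ _), hr_def]
    ring
  · by_cases hj : j = 0
    · rw [hj, le_antisymm (hj ▸ hij) (Fin.zero_le i)]
    · simpa [e, hj] using he i

theorem sq_sum_sqrt_mul_sortedPad {N k c L : ℕ} (hk : 0 < k) (hNL : N ≤ L * k) {q : Fin N → ℝ}
    (hq : ∀ j, 0 ≤ q j) {p : Fin c → ℝ} (hp : ∀ i, 0 ≤ p i) (hpa : Antitone p) {w : ℕ → ℝ}
    (hw : IsSortedPadOf (fun x : Fin k × Fin c => (1 / (k : ℝ)) * p x.2) w) :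
    (∑ j : Fin N, √(q j * w j)) ^ 2 = (k : ℝ)⁻¹ *
      (∑ i ∈ range L, blockSum (fun j => √(zeroPad q j)) N k i * √(zeroPad p i)) ^ 2 := by
  rw [sum_sqrt_mul_sortedPad hk hNL hq hp hpa hw, mul_pow, inv_pow,
    Real.sq_sqrt (Nat.cast_nonneg k)]

theorem exists_antitone_probVec_sq_sum_sqrt_mul_sortedPad_le {N k c L : ℕ} (hk : 0 < k)
    (hNL : N ≤ L * k) (hL : 0 < L) {q : Fin N → ℝ} (hq : ∀ j, 0 ≤ q j) {p : Fin c → ℝ}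
    (hp : IsProbVec p) {w : ℕ → ℝ}
    (hw : IsSortedPadOf (fun x : Fin k × Fin c => (1 / (k : ℝ)) * p x.2) w) :
    ∃ P : Fin L → ℝ, IsProbVec P ∧ Antitone P ∧ (∑ j : Fin N, √(q j * w j)) ^ 2 ≤
      (k : ℝ)⁻¹ * (∑ i : Fin L, blockSum (fun j => √(zeroPad q j)) N k i * √(P i)) ^ 2 := by
  obtain ⟨σ, hσ⟩ := exists_perm_antitone p
  have hpσ : IsProbVec (p ∘ σ) := ⟨fun i => hp.1 _, (Equiv.sum_comp σ p).trans hp.2⟩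
  obtain ⟨P, hP, hPa, hle⟩ := exists_antitone_probVec_zeroPad_le hL hpσ hσ
  refine ⟨P, hP, hPa, ?_⟩
  have hα (i : ℕ) : 0 ≤ blockSum (fun j => √(zeroPad q j)) N k i :=
    sum_nonneg fun j _ => Real.sqrt_nonneg _
  rw [sq_sum_sqrt_mul_sortedPad hk hNL hq hpσ.1 hσ (hw.comp_perm (.prodCongr (.refl _) σ)),
    sum_range]
  gcongr with i
  · exact sum_nonneg fun i _ => mul_nonneg (hα i) (Real.sqrt_nonneg _)
  · exact hα i
  · exact hle i

theorem sq_sum_mul_sqrt_le {L : ℕ} {α : ℕ → ℝ} (hα : ∀ i, 0 ≤ α i) {P : Fin L → ℝ}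
    (hP : IsProbVec P) : (∑ i : Fin L, α i * √(P i)) ^ 2 ≤ (∑ i : Fin L, α i) ^ 2 := by
  have hP1 (i : Fin L) : P i ≤ 1 := hP.2 ▸ single_le_sum (fun j _ => hP.1 j) (mem_univ i)
  gcongr with i
  · exact sum_nonneg fun i _ => mul_nonneg (hα i) (Real.sqrt_nonneg _)
  · exact mul_le_of_le_one_right (hα i) (Real.sqrt_le_one.mpr (hP1 i))

theorem sSup_eq_mul_sSup_of_forall_le {S T : Set ℝ} {a : ℝ} (ha : 0 ≤ a) (hT : T.Nonempty)
    (hTb : BddAbove T) (hTS : ∀ y ∈ T, a * y ∈ S) (hST : ∀ x ∈ S, ∃ y ∈ T, x ≤ a * y) :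
    sSup S = a * sSup T := by
  have hSb : ∀ x ∈ S, x ≤ a * sSup T := fun x hx =>
    let ⟨y, hy, hxy⟩ := hST x hx
    hxy.trans (mul_le_mul_of_nonneg_left (le_csSup hTb hy) ha)
  obtain ⟨y, hy⟩ := hT
  refine le_antisymm (csSup_le ⟨_, hTS y hy⟩ hSb) ?_
  rw [← smul_eq_mul, ← Real.sSup_smul_of_nonneg ha]
  exact csSup_le_csSup ⟨_, hSb⟩ (Set.Nonempty.smul_set ⟨y, hy⟩)
    (by rintro _ ⟨y, hy, rfl⟩; exact hTS y hy)

theorem stmt_12_general (N k : ℕ) (hN : 1 ≤ N) (hk : 1 ≤ k)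
    (q : Fin N → ℝ) (hq : IsProbVec q) :
    (∀ p' : Fin ((N + k - 1) / k) → ℝ, IsProbVec p' → Antitone p' →
      ∀ w : ℕ → ℝ,
        IsSortedPadOf
          (fun x : Fin k × Fin ((N + k - 1) / k) => (1 / (k : ℝ)) * p' x.2) w →
        ∑ j : Fin N, Real.sqrt (q j * w (j : ℕ)) =
          (Real.sqrt k)⁻¹ * ∑ i : Fin ((N + k - 1) / k),
            (∑ j ∈ Finset.Ico ((i : ℕ) * k) (min (((i : ℕ) + 1) * k) N),
              Real.sqrt (if h : j < N then q ⟨j, h⟩ else 0)) * Real.sqrt (p' i))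
    ∧
    sSup {x : ℝ | ∃ (c : ℕ) (p' : Fin c → ℝ) (w : ℕ → ℝ), IsProbVec p' ∧
        IsSortedPadOf (fun y : Fin k × Fin c => (1 / (k : ℝ)) * p' y.2) w ∧
        x = (∑ j : Fin N, Real.sqrt (q j * w (j : ℕ))) ^ 2}
      = (k : ℝ)⁻¹ * sSup {y : ℝ |
          ∃ p' : Fin ((N + k - 1) / k) → ℝ, IsProbVec p' ∧ Antitone p' ∧
            y = (∑ i : Fin ((N + k - 1) / k),
              (∑ j ∈ Finset.Ico ((i : ℕ) * k) (min (((i : ℕ) + 1) * k) N),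
                Real.sqrt (if h : j < N then q ⟨j, h⟩ else 0)) *
                  Real.sqrt (p' i)) ^ 2} := by
  have hNL : N ≤ (N + k - 1) / k * k := by
    rw [mul_comm]; exact le_smul_ceilDiv (a := k) hk
  have hL : 0 < (N + k - 1) / k := Nat.div_pos (by omega) hk
  -- the statement writes `α i` out, which is why the rewrites below close with `rfl`
  set α := blockSum (fun j => √(zeroPad q j)) N k
  refine ⟨fun p hp hpa w hw => ?_, ?_⟩
  · rw [sum_sqrt_mul_sortedPad hk hNL hq.1 hp.1 hpa hw,
      sum_range_zeroPad_comp (fun i x => α i * √x)]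
    rfl
  refine sSup_eq_mul_sSup_of_forall_le (inv_nonneg.mpr (Nat.cast_nonneg k)) ?_ ?_ ?_ ?_
  · have huniform : IsProbVec fun _ : Fin ((N + k - 1) / k) => 1 / ((N + k - 1) / k : ℕ) :=
      ⟨fun _ => by positivity, by simp [hL.ne']⟩
    exact ⟨_, _, huniform, antitone_const, rfl⟩
  · refine ⟨(∑ i : Fin ((N + k - 1) / k), α i) ^ 2, ?_⟩
    rintro _ ⟨P, hP, -, rfl⟩
    exact sq_sum_mul_sqrt_le (α := α) (fun i => sum_nonneg fun j _ => Real.sqrt_nonneg _) hP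
  · rintro _ ⟨p, hp, hpa, rfl⟩
    have hw := isSortedPadOf_const_mul hk (one_div_nonneg.mpr (Nat.cast_nonneg k)) hp.1 hpa
    refine ⟨_, p, _, hp, hw, ?_⟩
    rw [sq_sum_sqrt_mul_sortedPad hk hNL hq.1 hp.1 hpa hw,
      sum_range_zeroPad_comp (fun i x => α i * √x)]
    rfl
  · rintro _ ⟨c, p, w, hp, hw, rfl⟩
    obtain ⟨P, hP, hPa, hle⟩ :=
      exists_antitone_probVec_sq_sum_sqrt_mul_sortedPad_le hk hNL hL hq.1 hp hw
    exact ⟨_, ⟨P, hP, hPa, rfl⟩, hle⟩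

/-- distillation into a `k`-dimensional maximally entangled state
(uniform distribution `u` on `Fin k`), seed Schmidt distribution `q`
nonincreasing on `Fin N`, `L = ⌈N/k⌉`,
`α i = ∑_{j = i·k}^{min((i+1)·k, N) - 1} √(q j)` (zero-indexed blocks).
(1) For every nonincreasing ancilla distribution `p'` on `Fin L`,
`∑_{j<N} √(q j · (u⊗p')↓ j) = k^{-1/2} ∑ i, α i √(p' i)`; and
(2) the supremum of the fidelity over all ancilla distributions equals
`k⁻¹` times the supremum over nonincreasing `p'` on `Fin L` of `(∑ i, α i √(p' i))²`. -/
theorem stmt_12 (N k : ℕ) (hN : 1 ≤ N) (hk : 1 ≤ k)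
    (q : Fin N → ℝ) (hq : IsProbVec q) (hqa : Antitone q) :
    (∀ p' : Fin ((N + k - 1) / k) → ℝ, IsProbVec p' → Antitone p' →
      ∀ w : ℕ → ℝ,
        IsSortedPadOf
          (fun x : Fin k × Fin ((N + k - 1) / k) => (1 / (k : ℝ)) * p' x.2) w →
        ∑ j : Fin N, Real.sqrt (q j * w (j : ℕ)) =
          (Real.sqrt k)⁻¹ * ∑ i : Fin ((N + k - 1) / k),
            (∑ j ∈ Finset.Ico ((i : ℕ) * k) (min (((i : ℕ) + 1) * k) N),
              Real.sqrt (if h : j < N then q ⟨j, h⟩ else 0)) * Real.sqrt (p' i))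
    ∧
    sSup {x : ℝ | ∃ (c : ℕ) (p' : Fin c → ℝ) (w : ℕ → ℝ), IsProbVec p' ∧
        IsSortedPadOf (fun y : Fin k × Fin c => (1 / (k : ℝ)) * p' y.2) w ∧
        x = (∑ j : Fin N, Real.sqrt (q j * w (j : ℕ))) ^ 2}
      = (k : ℝ)⁻¹ * sSup {y : ℝ |
          ∃ p' : Fin ((N + k - 1) / k) → ℝ, IsProbVec p' ∧ Antitone p' ∧
            y = (∑ i : Fin ((N + k - 1) / k),
              (∑ j ∈ Finset.Ico ((i : ℕ) * k) (min (((i : ℕ) + 1) * k) N),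
                Real.sqrt (if h : j < N then q ⟨j, h⟩ else 0)) *
                  Real.sqrt (p' i)) ^ 2} :=
  stmt_12_general N k hN hk q hq
end

section
/- Let n ≥ 1 and p, q ∈ [1/2, 1]. Let P = (p, 1−p) and Q = (q, 1−q) be Bernoulli probability vectors, and let P^{⊗n}, Q^{⊗n} be the product vectors on {0,1}^n with P^{⊗n}(x) = Π_{k=1}^n P(x_k). Let w and v be the nonincreasing rearrangements of P^{⊗n} and Q^{⊗n} respectively. Then Σ_{i=1}^{2^n} √( w(i)·v(i) ) = Σ_{k=0}^{n} C(n,k)·(p·q)^{(n−k)/2}·((1−p)(1−q))^{k/2}, where C(n,k) is the binomial coefficient. (The square of this quantity is the optimal fidelity, under local unitaries and zero communication, for converting n copies of the two-qubit state with Schmidt distribution Q into n copies of the one with Schmidt distribution P.) -/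
/-!
Both `P^{⊗n}(x) = p^{n-|x|} (1-p)^{|x|}` and `Q^{⊗n}` depend on `x` only through its Hamming
weight `|x|`, and are nonincreasing in it because `p ≥ 1 - p` and `q ≥ 1 - q`. Hence listing `{0,1}^n`
by increasing weight sorts both vectors at once, and since a nonincreasing rearrangement is
unique, `w` and `v` are `P^{⊗n}` and `Q^{⊗n}` along this common enumeration. The Bhattacharyya
coefficient is then `∑_x √(P^{⊗n}(x) Q^{⊗n}(x)) = (√(pq) + √((1-p)(1-q)))^n`, which the
binomial theorem expands into the stated sum.
-/

open Finset

def boolWeight {n : ℕ} (x : Fin n → Bool) : ℕ := #{k | x k}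

def bernoulliProd (p : ℝ) {n : ℕ} (x : Fin n → Bool) : ℝ := ∏ k, if x k then 1 - p else p

lemma boolWeight_le {n : ℕ} (x : Fin n → Bool) : boolWeight x ≤ n :=
  (card_filter_le _ _).trans_eq (card_fin n)

lemma prod_ite_eq_pow_boolWeight {M : Type*} [CommMonoid M] {n : ℕ} (x : Fin n → Bool)
    (a b : M) :
    ∏ k, (if x k then a else b) = a ^ boolWeight x * b ^ (n - boolWeight x) := by
  have hcard : #{k | ¬ x k = true} = n - boolWeight x := by
    have := card_filter_add_card_filter_not (s := univ) (fun k : Fin n => x k = true)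
    rw [card_univ, Fintype.card_fin] at this
    unfold boolWeight
    omega
  rw [prod_ite, prod_const, prod_const, hcard]
  rfl

lemma pow_mul_pow_sub_le_of_le {R : Type*} [CommSemiring R] [PartialOrder R] [IsOrderedRing R]
    {a b : R} (ha : 0 ≤ a) (hab : a ≤ b) {n k l : ℕ} (hkl : k ≤ l) (hl : l ≤ n) :
    a ^ l * b ^ (n - l) ≤ a ^ k * b ^ (n - k) := by
  have hb : 0 ≤ b := ha.trans hab
  calc a ^ l * b ^ (n - l) = a ^ k * (a ^ (l - k) * b ^ (n - l)) := by
        rw [← mul_assoc, ← pow_add, Nat.add_sub_cancel' hkl]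
    _ ≤ a ^ k * (b ^ (l - k) * b ^ (n - l)) := by gcongr
    _ = a ^ k * b ^ (n - k) := by rw [← pow_add]; congr 2; omega

lemma exists_equiv_monotone_comp {α β : Type*} [LinearOrder α] {m : ℕ} (e : Fin m ≃ β)
    (g : β → α) : ∃ τ : Fin m ≃ β, Monotone (g ∘ τ) :=
  ⟨(Tuple.sort (g ∘ e)).trans e, Tuple.monotone_sort (g ∘ e)⟩

lemma eq_comp_of_antitone {α β : Type*} [PartialOrder α] {m : ℕ} {w : Fin m → α}
    (hw : Antitone w) {F : β → α} (e τ : Fin m ≃ β) (hτ : Antitone (F ∘ τ))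
    (hwe : ∀ i, w i = F (e i)) : w = F ∘ τ := by
  have hσ : w ∘ (τ.trans e.symm) = F ∘ τ := by
    funext i
    simp [hwe]
  have := Tuple.unique_antitone (σ := τ.trans e.symm) (τ := Equiv.refl _) (hσ ▸ hτ) hw
  rw [← hσ, this]
  rfl

lemma antitone_bernoulliProd_comp {p : ℝ} (hp : p ∈ Set.Icc (1 / 2 : ℝ) 1) {m n : ℕ}
    {τ : Fin m ≃ (Fin n → Bool)} (hτ : Monotone (boolWeight ∘ τ)) :
    Antitone (bernoulliProd p ∘ τ) := by
  intro i j hij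
  simp only [Function.comp_apply, bernoulliProd, prod_ite_eq_pow_boolWeight]
  exact pow_mul_pow_sub_le_of_le (by linarith [hp.2]) (by linarith [hp.1]) (hτ hij)
    (boolWeight_le _)

lemma sum_sqrt_prod_ite_mul_prod_ite {a b c d : ℝ} (ha : 0 ≤ a) (hb : 0 ≤ b) (hc : 0 ≤ c)
    (hd : 0 ≤ d) (n : ℕ) :
    ∑ x : Fin n → Bool,
        √((∏ k, if x k then a else b) * ∏ k, if x k then c else d) =
      (√(a * c) + √(b * d)) ^ n := by
  have hterm (x : Fin n → Bool) :
      √((∏ k, if x k then a else b) * ∏ k, if x k then c else d) =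
        ∏ k, if x k then √(a * c) else √(b * d) := by
    rw [← prod_mul_distrib, Real.sqrt_prod _ fun k _ => by split_ifs <;> positivity]
    exact prod_congr rfl fun k _ => by split_ifs <;> rfl
  simp only [hterm]
  simpa using (Fintype.sum_pow (fun t : Bool => if t then √(a * c) else √(b * d)) n).symm

lemma sqrt_pow_eq_rpow {c : ℝ} (hc : 0 ≤ c) (m : ℕ) : √c ^ m = c ^ ((m : ℝ) / 2) := by
  rw [Real.sqrt_eq_rpow, ← Real.rpow_natCast, ← Real.rpow_mul hc]
  ring_nf

theorem stmt_13_general (n : ℕ) (p q : ℝ)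
    (hp : p ∈ Set.Icc (1 / 2 : ℝ) 1) (hq : q ∈ Set.Icc (1 / 2 : ℝ) 1)
    (w v : Fin (2 ^ n) → ℝ) (hw : Antitone w) (hv : Antitone v)
    (ew : Fin (2 ^ n) ≃ (Fin n → Bool)) (ev : Fin (2 ^ n) ≃ (Fin n → Bool))
    (hwe : ∀ i, w i = ∏ k, (if ew i k then 1 - p else p))
    (hve : ∀ i, v i = ∏ k, (if ev i k then 1 - q else q)) :
    ∑ i, Real.sqrt (w i * v i) =
      ∑ k ∈ Finset.range (n + 1), (n.choose k : ℝ) *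
        (p * q) ^ (((n : ℝ) - (k : ℝ)) / 2) *
        ((1 - p) * (1 - q)) ^ ((k : ℝ) / 2) := by
  obtain ⟨τ, hτ⟩ := exists_equiv_monotone_comp ew boolWeight
  have hwτ := eq_comp_of_antitone hw ew τ (antitone_bernoulliProd_comp hp hτ) hwe
  have hvτ := eq_comp_of_antitone hv ev τ (antitone_bernoulliProd_comp hq hτ) hve
  calc ∑ i, √(w i * v i)
      = ∑ x : Fin n → Bool, √(bernoulliProd p x * bernoulliProd q x) := by
        rw [hwτ, hvτ]
        exact Fintype.sum_equiv τ _ _ fun _ => rfl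
    _ = (√((1 - p) * (1 - q)) + √(p * q)) ^ n :=
        sum_sqrt_prod_ite_mul_prod_ite (by linarith [hp.2]) (by linarith [hp.1])
          (by linarith [hq.2]) (by linarith [hq.1]) n
    _ = _ := by
        rw [add_pow]
        refine sum_congr rfl fun k hk => ?_
        rw [sqrt_pow_eq_rpow (by nlinarith [hp.2, hq.2]),
          sqrt_pow_eq_rpow (by nlinarith [hp.1, hq.1]),
          Nat.cast_sub (Nat.lt_succ_iff.mp (mem_range.mp hk))]
        ring

/-- if `w`, `v` are the nonincreasing rearrangements of the
`n`-fold Bernoulli product vectors `P^{⊗n}`, `Q^{⊗n}` (with `P = (p, 1-p)`,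
`Q = (q, 1-q)`, `p, q ∈ [1/2, 1]`), then their Bhattacharyya coefficient is
`∑_{k=0}^{n} C(n,k) (pq)^{(n-k)/2} ((1-p)(1-q))^{k/2}`. -/
theorem stmt_13 (n : ℕ) (hn : 1 ≤ n) (p q : ℝ)
    (hp : p ∈ Set.Icc (1 / 2 : ℝ) 1) (hq : q ∈ Set.Icc (1 / 2 : ℝ) 1)
    (w v : Fin (2 ^ n) → ℝ) (hw : Antitone w) (hv : Antitone v)
    (ew : Fin (2 ^ n) ≃ (Fin n → Bool)) (ev : Fin (2 ^ n) ≃ (Fin n → Bool))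
    (hwe : ∀ i, w i = ∏ k, (if ew i k then 1 - p else p))
    (hve : ∀ i, v i = ∏ k, (if ev i k then 1 - q else q)) :
    ∑ i, Real.sqrt (w i * v i) =
      ∑ k ∈ Finset.range (n + 1), (n.choose k : ℝ) *
        (p * q) ^ (((n : ℝ) - (k : ℝ)) / 2) *
        ((1 - p) * (1 - q)) ^ ((k : ℝ) / 2) :=
  stmt_13_general n p q hp hq w v hw hv ew ev hwe hve
end

section
/- Let p, q ∈ [1/2, 1) with p ≠ q. Let P = (p, 1−p), Q = (q, 1−q), and for each n ≥ 1 let w_n, v_n be the nonincreasing rearrangements of the product vectors P^{⊗n}, Q^{⊗n} on {0,1}^n. Then lim_{n→∞} ( Σ_{i=1}^{2^n} √( w_n(i)·v_n(i) ) )² = 0. (The optimal fidelity, under local unitaries and zero communication, of converting n copies of one entangled two-qubit pure state into n copies of a different entangled two-qubit pure state tends to zero as n → ∞.) -/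
/-!
Write `‖x‖ₛ = (∑ xᵢ ^ s) ^ (1/s)`. For `1/s + 1/t = 2`, Hölder's inequality gives
`(∑ √(wᵢ vᵢ))² ≤ ‖w‖ₛ ‖v‖ₜ`, and for product distributions `‖P^{⊗n}‖ₛ = ‖P‖ₛ ^ n`, so it suffices
to find such `s, t` with `‖P‖ₛ ‖Q‖ₜ < 1`. Along the curve `t = s / (2s - 1)` this product equals
`1` at `s = 1`, with derivative `H(Q) - H(P)` there (`H` the binary entropy). Since `H` is
injective on `[1/2, 1]`, the derivative is nonzero, so the product drops below `1` near `s = 1`.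
-/

open Real Filter Topology Finset

noncomputable def bernoulliLpNorm (p s : ℝ) : ℝ := (p ^ s + (1 - p) ^ s) ^ s⁻¹

lemma bernoulliLpNorm_nonneg {p : ℝ} (hp₀ : 0 ≤ p) (hp₁ : p ≤ 1) (s : ℝ) :
    0 ≤ bernoulliLpNorm p s := by
  have : 0 ≤ 1 - p := sub_nonneg.2 hp₁
  unfold bernoulliLpNorm
  positivity

@[simp] lemma bernoulliLpNorm_one (p : ℝ) : bernoulliLpNorm p 1 = 1 := by
  simp [bernoulliLpNorm]

lemma hasDerivAt_bernoulliLpNorm_one {p : ℝ} (hp₀ : 0 < p) (hp₁ : p < 1) :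
    HasDerivAt (bernoulliLpNorm p) (-binEntropy p) 1 := by
  have hsum : HasDerivAt (fun s : ℝ => p ^ s + (1 - p) ^ s)
      (p ^ (1 : ℝ) * log p + (1 - p) ^ (1 : ℝ) * log (1 - p)) 1 :=
    (hasStrictDerivAt_const_rpow hp₀ 1).hasDerivAt.add
      (hasStrictDerivAt_const_rpow (sub_pos.2 hp₁) 1).hasDerivAt
  refine (hsum.rpow (hasDerivAt_inv one_ne_zero) (by simp)).congr_deriv ?_
  simp [binEntropy, log_inv]
  ring

lemma sum_prod_ite_rpow {ι : Type*} [Fintype ι] {n : ℕ} (e : ι ≃ (Fin n → Bool)) {a b : ℝ}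
    (ha : 0 ≤ a) (hb : 0 ≤ b) (s : ℝ) :
    ∑ i, (∏ k, if e i k then a else b) ^ s = (a ^ s + b ^ s) ^ n := by
  rw [← e.symm.sum_comp]
  simp only [Equiv.apply_symm_apply]
  calc ∑ x : Fin n → Bool, (∏ k, if x k then a else b) ^ s
      = ∑ x : Fin n → Bool, ∏ k, if x k then a ^ s else b ^ s := by
        refine sum_congr rfl fun x _ => ?_
        rw [← finsetProd_rpow _ _ fun k _ => by split <;> assumption]
        simp only [apply_ite (· ^ s)]
    _ = (a ^ s + b ^ s) ^ n := by
        rw [← Fintype.prod_sum (fun (_ : Fin n) (c : Bool) => if c then a ^ s else b ^ s)]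
        simp

lemma sum_prod_bernoulli_rpow_rpow_inv {ι : Type*} [Fintype ι] {n : ℕ} (e : ι ≃ (Fin n → Bool))
    {p : ℝ} (hp₀ : 0 ≤ p) (hp₁ : p ≤ 1) (s : ℝ) :
    (∑ i, (∏ k, if e i k then 1 - p else p) ^ s) ^ s⁻¹ = bernoulliLpNorm p s ^ n := by
  have hq₀ : 0 ≤ 1 - p := sub_nonneg.2 hp₁
  rw [sum_prod_ite_rpow e hq₀ hp₀,
    ← rpow_pow_comm (add_nonneg (rpow_nonneg hq₀ s) (rpow_nonneg hp₀ s)), bernoulliLpNorm,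
    add_comm]

lemma sq_sum_sqrt_mul_le {ι : Type*} (S : Finset ι) {w v : ι → ℝ} {s t : ℝ}
    (hst : s.HolderTriple t (1 / 2)) (hw : ∀ i ∈ S, 0 ≤ w i) (hv : ∀ i ∈ S, 0 ≤ v i) :
    (∑ i ∈ S, √(w i * v i)) ^ 2 ≤ (∑ i ∈ S, w i ^ s) ^ s⁻¹ * (∑ i ∈ S, v i ^ t) ^ t⁻¹ := by
  have hW : 0 ≤ ∑ i ∈ S, w i ^ s := sum_nonneg fun i hi => rpow_nonneg (hw i hi) s
  have hV : 0 ≤ ∑ i ∈ S, v i ^ t := sum_nonneg fun i hi => rpow_nonneg (hv i hi) t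
  calc (∑ i ∈ S, √(w i * v i)) ^ 2 = (∑ i ∈ S, (w i * v i) ^ (1 / 2 : ℝ)) ^ 2 := by
        simp only [sqrt_eq_rpow]
    _ ≤ ((∑ i ∈ S, w i ^ s) ^ ((1 / 2) / s) * (∑ i ∈ S, v i ^ t) ^ ((1 / 2) / t)) ^ 2 :=
        pow_le_pow_left₀ (sum_nonneg fun i hi => rpow_nonneg (mul_nonneg (hw i hi) (hv i hi)) _)
          (Lr_rpow_le_Lp_mul_Lq_of_nonneg S hst hw hv) 2
    _ = (∑ i ∈ S, w i ^ s) ^ s⁻¹ * (∑ i ∈ S, v i ^ t) ^ t⁻¹ := by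
        rw [mul_pow, ← rpow_mul_natCast hW, ← rpow_mul_natCast hV]
        congr 2 <;> push_cast <;> field_simp

lemma exists_holderTriple_bernoulliLpNorm_mul_lt_one {p q : ℝ} (hp : p ∈ Set.Ico (1 / 2 : ℝ) 1)
    (hq : q ∈ Set.Ico (1 / 2 : ℝ) 1) (hpq : p ≠ q) :
    ∃ s t : ℝ, s.HolderTriple t (1 / 2) ∧ bernoulliLpNorm p s * bernoulliLpNorm q t < 1 := by
  have hp₀ : 0 < p := by linarith [hp.1]
  have hq₀ : 0 < q := by linarith [hq.1]
  set ρ : ℝ → ℝ := fun s => bernoulliLpNorm p s * bernoulliLpNorm q (s / (2 * s - 1))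
  have hconj : HasDerivAt (fun s : ℝ => s / (2 * s - 1)) (-1) 1 :=
    ((hasDerivAt_id' (1 : ℝ)).div (((hasDerivAt_id' 1).const_mul 2).sub_const 1)
      (by norm_num)).congr_deriv (by norm_num)
  have hderiv : HasDerivAt ρ (binEntropy q - binEntropy p) 1 := by
    refine ((hasDerivAt_bernoulliLpNorm_one hp₀ hp.2).mul
      ((hasDerivAt_bernoulliLpNorm_one hq₀ hq.2).comp_of_eq 1 hconj
        (by norm_num))).congr_deriv ?_
    norm_num
    ring
  have hne : binEntropy q - binEntropy p ≠ 0 := by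
    refine sub_ne_zero.2 fun h => hpq (binEntropy_strictAntiOn.injOn ?_ ?_ h.symm)
    · exact ⟨by linarith [hp.1], hp.2.le⟩
    · exact ⟨by linarith [hq.1], hq.2.le⟩
  have hnotmin : ∃ᶠ s in 𝓝 1, ρ s < ρ 1 := by
    have : ¬IsLocalMin ρ 1 := fun h => hne (h.hasDerivAt_eq_zero hderiv)
    simpa only [IsLocalMin, IsMinFilter, not_eventually, not_le] using this
  obtain ⟨s, hlt, hs⟩ :=
    (hnotmin.and_eventually (eventually_gt_nhds (by norm_num : (1 / 2 : ℝ) < 1))).exists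
  refine ⟨s, s / (2 * s - 1), ⟨?_, by linarith, div_pos (by linarith) (by linarith)⟩, ?_⟩
  · field_simp
    ring
  · norm_num [ρ] at hlt
    exact hlt

theorem stmt_14_general (p q : ℝ)
    (hp : p ∈ Set.Ico (1 / 2 : ℝ) 1) (hq : q ∈ Set.Ico (1 / 2 : ℝ) 1) (hpq : p ≠ q)
    (w v : (n : ℕ) → Fin (2 ^ n) → ℝ)
    (ew : (n : ℕ) → (Fin (2 ^ n) ≃ (Fin n → Bool)))
    (ev : (n : ℕ) → (Fin (2 ^ n) ≃ (Fin n → Bool)))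
    (hwe : ∀ n i, w n i = ∏ k, (if ew n i k then 1 - p else p))
    (hve : ∀ n i, v n i = ∏ k, (if ev n i k then 1 - q else q)) :
    Filter.Tendsto (fun n : ℕ => (∑ i, Real.sqrt (w n i * v n i)) ^ 2)
      Filter.atTop (nhds 0) := by
  have hp₀ : 0 ≤ p := by linarith [hp.1]
  have hq₀ : 0 ≤ q := by linarith [hq.1]
  obtain ⟨s, t, hst, hlt⟩ := exists_holderTriple_bernoulliLpNorm_mul_lt_one hp hq hpq
  have hw : ∀ n i, 0 ≤ w n i := fun n i => (hwe n i).symm ▸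
    prod_nonneg fun k _ => by split <;> linarith [hp.2]
  have hv : ∀ n i, 0 ≤ v n i := fun n i => (hve n i).symm ▸
    prod_nonneg fun k _ => by split <;> linarith [hq.2]
  have hbound : ∀ n, (∑ i, √(w n i * v n i)) ^ 2 ≤
      (bernoulliLpNorm p s * bernoulliLpNorm q t) ^ n := fun n => by
    calc _ ≤ _ := sq_sum_sqrt_mul_le _ hst (fun i _ => hw n i) (fun i _ => hv n i)
      _ = _ := by
        simp only [hwe, hve]
        rw [sum_prod_bernoulli_rpow_rpow_inv _ hp₀ hp.2.le,
          sum_prod_bernoulli_rpow_rpow_inv _ hq₀ hq.2.le, mul_pow]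
  exact squeeze_zero (fun n => sq_nonneg _) hbound <| tendsto_pow_atTop_nhds_zero_of_lt_one
    (mul_nonneg (bernoulliLpNorm_nonneg hp₀ hp.2.le s) (bernoulliLpNorm_nonneg hq₀ hq.2.le t)) hlt

/-- for inequivalent entangled two-qubit states (Bernoulli
parameters `p ≠ q` in `[1/2, 1)`), the optimal local-unitary conversion
fidelity between `n` copies, i.e. the squared Bhattacharyya coefficient of the
sorted `n`-fold product distributions, tends to `0` as `n → ∞`. -/
theorem stmt_14 (p q : ℝ)
    (hp : p ∈ Set.Ico (1 / 2 : ℝ) 1) (hq : q ∈ Set.Ico (1 / 2 : ℝ) 1) (hpq : p ≠ q)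
    (w v : (n : ℕ) → Fin (2 ^ n) → ℝ)
    (hw : ∀ n, Antitone (w n)) (hv : ∀ n, Antitone (v n))
    (ew : (n : ℕ) → (Fin (2 ^ n) ≃ (Fin n → Bool)))
    (ev : (n : ℕ) → (Fin (2 ^ n) ≃ (Fin n → Bool)))
    (hwe : ∀ n i, w n i = ∏ k, (if ew n i k then 1 - p else p))
    (hve : ∀ n i, v n i = ∏ k, (if ev n i k then 1 - q else q)) :
    Filter.Tendsto (fun n : ℕ => (∑ i, Real.sqrt (w n i * v n i)) ^ 2)
      Filter.atTop (nhds 0) :=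
  stmt_14_general p q hp hq hpq w v ew ev hwe hve
end
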